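/- arXiv:1907.03409 — 7 statements merged into one kernel-verified Lean document; each statement's English description precedes it below -/
import Mathlib

section
/- Let (x₁, x₂, x₃, x₄) : ℝ → ℝ⁴ be a solution of the ODE system x₁' = x₂, x₂' = 4x₁ + x₃, x₃' = x₄, x₄' = 4x₁x₄. Then the quantity 2x₂(t)² − 8x₁(t)² − 4x₁(t)x₃(t) + x₄(t) is constant in t. -/
theorem hasDerivAt_qCurvature_firstIntegral {𝕜 : Type*} [NontriviallyNormedField 𝕜]
    {x₁ x₂ x₃ x₄ : 𝕜 → 𝕜} {t : 𝕜}
    (h₁ : HasDerivAt x₁ (x₂ t) t)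
    (h₂ : HasDerivAt x₂ (4 * x₁ t + x₃ t) t)
    (h₃ : HasDerivAt x₃ (x₄ t) t)
    (h₄ : HasDerivAt x₄ (4 * x₁ t * x₄ t) t) :
    HasDerivAt (fun u => 2 * (x₂ u) ^ 2 - 8 * (x₁ u) ^ 2 - 4 * x₁ u * x₃ u + x₄ u) 0 t := by
  have h := ((((h₂.pow 2).const_mul 2).sub ((h₁.pow 2).const_mul 8)).sub
    ((h₁.const_mul 4).mul h₃)).add h₄
  exact h.congr_deriv (by push_cast; ring)

/-- First integral of the ODE system `x₁' = x₂`, `x₂' = 4x₁ + x₃`, `x₃' = x₄`,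
`x₄' = 4x₁x₄` arising from the radial constant Q-curvature equation:
the quantity `2x₂² − 8x₁² − 4x₁x₃ + x₄` is constant along any solution. -/
theorem first_integral_of_system (x₁ x₂ x₃ x₄ : ℝ → ℝ)
    (h₁ : ∀ t : ℝ, HasDerivAt x₁ (x₂ t) t)
    (h₂ : ∀ t : ℝ, HasDerivAt x₂ (4 * x₁ t + x₃ t) t)
    (h₃ : ∀ t : ℝ, HasDerivAt x₃ (x₄ t) t)
    (h₄ : ∀ t : ℝ, HasDerivAt x₄ (4 * x₁ t * x₄ t) t) :
    ∀ s t : ℝ,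
      2 * (x₂ t) ^ 2 - 8 * (x₁ t) ^ 2 - 4 * x₁ t * x₃ t + x₄ t =
      2 * (x₂ s) ^ 2 - 8 * (x₁ s) ^ 2 - 4 * x₁ s * x₃ s + x₄ s := by
  intro s t
  have hE u := hasDerivAt_qCurvature_firstIntegral (h₁ u) (h₂ u) (h₃ u) (h₄ u)
  exact is_const_of_deriv_eq_zero (fun u => (hE u).differentiableAt) (fun u => (hE u).deriv) t s
end

section
/- Let v : ℝ → ℝ be four times continuously differentiable with v''''(t) − 4v''(t) = e^{4v(t)} for all t. Then the quantity 2(v''(t))² + 8(v'(t))² − 4 v'(t) v'''(t) + e^{4v(t)} is constant in t. -/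
open Filter

/-- First integral of the radial constant Q-curvature equation `v'''' − 4v'' = e^{4v}`
on `ℝ`: the quantity `2(v'')² + 8(v')² − 4v'v''' + e^{4v}` is constant. -/
theorem first_integral_of_radial_equation (v : ℝ → ℝ)
    (hv : ContDiff ℝ 4 v)
    (hode : ∀ t : ℝ, iteratedDeriv 4 v t - 4 * iteratedDeriv 2 v t = Real.exp (4 * v t)) :
    ∀ s t : ℝ,
      2 * (iteratedDeriv 2 v t) ^ 2 + 8 * (deriv v t) ^ 2 -
          4 * deriv v t * iteratedDeriv 3 v t + Real.exp (4 * v t) =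
      2 * (iteratedDeriv 2 v s) ^ 2 + 8 * (deriv v s) ^ 2 -
          4 * deriv v s * iteratedDeriv 3 v s + Real.exp (4 * v s) := by
  have hd : ∀ m : ℕ, m < 4 → ∀ t : ℝ,
      HasDerivAt (iteratedDeriv m v) (iteratedDeriv (m + 1) v t) t := by
    intro m hm t
    have h1 : DifferentiableAt ℝ (iteratedDeriv m v) t :=
      (hv.differentiable_iteratedDeriv m (by exact_mod_cast hm)) t
    simpa [iteratedDeriv_succ] using h1.hasDerivAt
  set E : ℝ → ℝ := fun t =>
    2 * (iteratedDeriv 2 v t) ^ 2 + 8 * (deriv v t) ^ 2 -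
      4 * deriv v t * iteratedDeriv 3 v t + Real.exp (4 * v t)
  have hE : ∀ t : ℝ, HasDerivAt E 0 t := by
    intro t
    have h0 : HasDerivAt v (iteratedDeriv 1 v t) t := by
      simpa [iteratedDeriv_one] using hd 0 (by norm_num) t
    have h1 : HasDerivAt (deriv v) (iteratedDeriv 2 v t) t := by
      have := hd 1 (by norm_num) t
      simpa [iteratedDeriv_one] using this
    have h2 : HasDerivAt (iteratedDeriv 2 v) (iteratedDeriv 3 v t) t := hd 2 (by norm_num) t
    have h3 : HasDerivAt (iteratedDeriv 3 v) (iteratedDeriv 4 v t) t := hd 3 (by norm_num) t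
    have hexp : HasDerivAt (fun t => Real.exp (4 * v t))
        (Real.exp (4 * v t) * (4 * iteratedDeriv 1 v t)) t :=
      (h0.const_mul 4).exp
    have hE' : HasDerivAt E
        (2 * (2 * iteratedDeriv 2 v t ^ 1 * iteratedDeriv 3 v t) +
          8 * (2 * deriv v t ^ 1 * iteratedDeriv 2 v t) -
          ((4 * iteratedDeriv 2 v t) * iteratedDeriv 3 v t +
            (4 * deriv v t) * iteratedDeriv 4 v t) +
          Real.exp (4 * v t) * (4 * iteratedDeriv 1 v t)) t := by
      exact ((((h2.pow 2).const_mul 2).add ((h1.pow 2).const_mul 8)).sub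
        ((h1.const_mul 4).mul h3)).add hexp
    have hode' := hode t
    have h1d : iteratedDeriv 1 v t = deriv v t := by simp [iteratedDeriv_one]
    have h4 : iteratedDeriv 4 v t = 4 * iteratedDeriv 2 v t + Real.exp (4 * v t) := by
      linarith
    convert hE' using 1
    rw [h1d, h4]
    ring
  have := fun s t : ℝ =>
    is_const_of_deriv_eq_zero (fun x => (hE x).differentiableAt)
      (fun x => (hE x).deriv) t s
  intro s t
  exact this s t
end

section
/- Let (x₁, x₂, x₃, x₄) and (y₁, y₂, y₃, y₄) be solutions on [0, ∞) of the ODE system x₁' = x₂, x₂' = 4x₁ + x₃, x₃' = x₄, x₄' = 4x₁x₄, with y₄(0) > 0. Suppose xᵢ(0) ≥ yᵢ(0) for i = 1, 2, 3, 4. Then xᵢ(t) ≥ yᵢ(t) for all t > 0 and i = 1, 2, 3, 4. Moreover, if in addition x_j(0) > y_j(0) for some j, then xᵢ(t) > yᵢ(t) for all t > 0 and all i = 1, 2, 3, 4. -/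
/-!
The difference `z = x - y` solves the linear system `z₁' = z₂`, `z₂' = 4 z₁ + z₃`, `z₃' = z₄`,
`z₄' = 4 x₁ z₄ + 4 y₄ z₁`, whose coefficient matrix has nonnegative off-diagonal entries since
`y₄ > 0`. For such a cooperative system the sum `F` of the negative parts of the components obeys
`F' ≤ M F` on compact intervals, so Gronwall's inequality and `F(0) = 0` give `z ≥ 0`. Strict
positivity then travels around the cycle `z₂ ⇒ z₁ ⇒ z₄ ⇒ z₃ ⇒ z₂` (an integrating factor takes
care of the `4 x₁ z₄` term), and starts wherever some `z_j(0) > 0`.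
-/

open Set Filter Topology Matrix

lemma negPart_mul_of_nonneg {c : ℝ} (hc : 0 ≤ c) (a : ℝ) : (c * a)⁻ = c * a⁻ := by
  simp only [negPart_def, mul_max_of_nonneg _ _ hc, mul_neg, mul_zero]

lemma HasDerivWithinAt.exists_negPart_le {f : ℝ → ℝ} {d x B : ℝ}
    (hf : HasDerivWithinAt f d (Ici x) x) (hB : 0 ≤ B) (hd : f x ≤ 0 → -d ≤ B) :
    ∃ D ≤ B, HasDerivWithinAt (fun t => (f t)⁻) D (Ici x) x := by
  rcases lt_trichotomy (f x) 0 with hneg | hzero | hpos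
  · refine ⟨-d, hd hneg.le, hf.neg.congr_of_eventuallyEq ?_ (negPart_of_nonpos hneg.le)⟩
    filter_upwards [hf.continuousWithinAt.eventually_lt_const hneg] with t ht
      using negPart_of_nonpos ht.le
  · refine ⟨d⁻, max_le (hd hzero.le) hB, ?_⟩
    rw [← hasDerivWithinAt_Ioi_iff_Ici, hasDerivWithinAt_iff_tendsto_slope' self_notMem_Ioi]
    have hslope := (hasDerivWithinAt_iff_tendsto_slope' self_notMem_Ioi).1 hf.Ioi_of_Ici
    refine ((continuous_negPart.tendsto d).comp hslope).congr' ?_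
    filter_upwards [self_mem_nhdsWithin] with t ht
    simp only [Function.comp_apply, slope_def_field, hzero, negPart_zero, sub_zero, div_eq_inv_mul]
    exact negPart_mul_of_nonneg (inv_nonneg.2 (sub_pos.2 ht).le) _
  · refine ⟨0, hB, (hasDerivWithinAt_const x _ 0).congr_of_eventuallyEq ?_
      (negPart_of_nonneg hpos.le)⟩
    filter_upwards [hf.continuousWithinAt.eventually_const_lt hpos] with t ht
      using negPart_of_nonneg ht.le

lemma neg_mul_le_abs_mul_negPart {a b : ℝ} (h : 0 ≤ a ∨ b ≤ 0) : -(a * b) ≤ |a| * b⁻ := by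
  rw [← mul_neg]
  rcases h with ha | hb
  · rw [abs_of_nonneg ha]
    exact mul_le_mul_of_nonneg_left (neg_le_negPart b) ha
  · rw [negPart_of_nonpos hb]
    exact mul_le_mul_of_nonneg_right (le_abs_self a) (neg_nonneg.2 hb)

theorem nonneg_of_hasDerivWithinAt_mulVec {ι : Type*} [Fintype ι] {A : ℝ → Matrix ι ι ℝ}
    {z : ℝ → ι → ℝ} {a : ℝ} (hA : ContinuousOn A (Ici a))
    (hA_offDiag : ∀ t ∈ Ici a, ∀ i j, i ≠ j → 0 ≤ A t i j)
    (hz : ∀ t ∈ Ici a, HasDerivWithinAt z (A t *ᵥ z t) (Ici a) t) (h₀ : 0 ≤ z a) :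
    ∀ t ∈ Ici a, 0 ≤ z t := by
  intro b hb i
  set F : ℝ → ℝ := fun t => ∑ i, (z t i)⁻
  have hF_nonneg : ∀ t, 0 ≤ F t := fun t => Finset.sum_nonneg fun i _ => negPart_nonneg _
  have hF_cont : ContinuousOn F (Icc a b) := by
    have hz_cont : ContinuousOn z (Icc a b) := fun t ht =>
      (hz t ht.1).continuousWithinAt.mono Icc_subset_Ici_self
    exact continuousOn_finsetSum _ fun i _ =>
      continuous_negPart.comp_continuousOn ((continuous_apply i).comp_continuousOn hz_cont)
  obtain ⟨M, hM⟩ :=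
    isCompact_Icc.exists_bound_of_continuousOn (f := fun t => ∑ i, ∑ j, |A t i j|)
    (continuousOn_finsetSum _ fun i _ => continuousOn_finsetSum _ fun j _ =>
      ((continuous_apply_apply i j).comp_continuousOn (hA.mono Icc_subset_Ici_self)).abs)
  have hD : ∀ t ∈ Ici a, ∀ i, ∃ D ≤ ∑ j, |A t i j| * (z t j)⁻,
      HasDerivWithinAt (fun s => (z s i)⁻) D (Ici t) t := by
    intro t ht i
    have hzi := hasDerivWithinAt_pi.1 ((hz t ht).mono (Ici_subset_Ici.2 ht)) i
    refine hzi.exists_negPart_le (by positivity) fun hi => ?_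
    rw [Matrix.mulVec, dotProduct, ← Finset.sum_neg_distrib]
    refine Finset.sum_le_sum fun j _ => neg_mul_le_abs_mul_negPart ?_
    by_cases hij : i = j
    · exact Or.inr (hij ▸ hi)
    · exact Or.inl (hA_offDiag t ht i j hij)
  choose! D hD_le hD using hD
  have hF_deriv : ∀ t ∈ Ici a, HasDerivWithinAt F (∑ i, D t i) (Ici t) t := fun t ht =>
    HasDerivWithinAt.fun_sum fun i _ => hD t ht i
  have bound : ∀ t ∈ Ico a b, ∑ i, D t i ≤ M * F t + 0 := by
    intro t ht
    calc ∑ i, D t i ≤ ∑ i, ∑ j, |A t i j| * (z t j)⁻ :=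
          Finset.sum_le_sum fun i _ => hD_le t ht.1 i
      _ ≤ ∑ i, ∑ j, |A t i j| * F t := by
        gcongr with i _ j _
        exact Finset.single_le_sum (f := fun j => (z t j)⁻) (fun j _ => negPart_nonneg _)
          (Finset.mem_univ j)
      _ = (∑ i, ∑ j, |A t i j|) * F t := by simp only [Finset.sum_mul]
      _ ≤ M * F t + 0 := by
        rw [add_zero]
        exact mul_le_mul_of_nonneg_right ((le_abs_self _).trans (hM t (Ico_subset_Icc_self ht)))
          (hF_nonneg t)
  have hFb := le_gronwallBound_of_liminf_deriv_right_le hF_cont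
    (fun t ht r hr => (hF_deriv t ht.1).liminf_right_slope_le hr)
    (δ := 0) (by simp [F, negPart_of_nonneg (h₀ _)]) bound b ⟨hb, le_rfl⟩
  rw [gronwallBound_ε0_δ0] at hFb
  exact negPart_nonpos.1 ((Finset.single_le_sum (f := fun j => (z b j)⁻)
    (fun j _ => negPart_nonneg _) (Finset.mem_univ i)).trans hFb)

section Scalar

variable {f f' : ℝ → ℝ} {a : ℝ}

lemma pos_of_pos_of_hasDerivWithinAt_nonneg
    (hf : ∀ t ∈ Ici a, HasDerivWithinAt f (f' t) (Ici a) t) (hf' : ∀ t > a, 0 ≤ f' t)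
    (ha : 0 < f a) : ∀ t ∈ Ici a, 0 < f t := by
  have hmono : MonotoneOn f (Ici a) :=
    monotoneOn_of_hasDerivWithinAt_nonneg (convex_Ici a)
      (fun t ht => (hf t ht).continuousWithinAt)
      (fun t ht => (hf t (interior_subset ht)).mono interior_subset)
      (fun t ht => hf' t (by rwa [interior_Ici] at ht))
  exact fun t ht => ha.trans_le (hmono self_mem_Ici ht ht)

lemma pos_of_nonneg_of_hasDerivWithinAt_pos
    (hf : ∀ t ∈ Ici a, HasDerivWithinAt f (f' t) (Ici a) t) (hf' : ∀ t > a, 0 < f' t)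
    (ha : 0 ≤ f a) : ∀ t > a, 0 < f t := by
  have hmono : StrictMonoOn f (Ici a) :=
    strictMonoOn_of_hasDerivWithinAt_pos (convex_Ici a)
      (fun t ht => (hf t ht).continuousWithinAt)
      (fun t ht => (hf t (interior_subset ht)).mono interior_subset)
      (fun t ht => hf' t (by rwa [interior_Ici] at ht))
  exact fun t ht => ha.trans_lt (hmono self_mem_Ici (mem_Ici.2 ht.le) ht)

end Scalar

section Linear

variable {c w g : ℝ → ℝ} {a : ℝ}

lemma exists_integratingFactor (hc : ContinuousOn c (Ici a))
    (hw : ∀ t ∈ Ici a, HasDerivWithinAt w (c t * w t + g t) (Ici a) t) :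
    ∃ E : ℝ → ℝ, (∀ t, 0 < E t) ∧
      ∀ t ∈ Ici a, HasDerivWithinAt (fun s => E s * w s) (E t * g t) (Ici a) t := by
  have hc' : Continuous fun s => c (max s a) :=
    hc.comp_continuous (continuous_id.max continuous_const) fun s => le_max_right s a
  have hC : ∀ t ∈ Ici a, HasDerivAt (fun t => ∫ s in a..t, c (max s a)) (c t) t := fun t ht => by
    simpa [max_eq_left (mem_Ici.1 ht)] using (hc'.integral_hasStrictDerivAt a t).hasDerivAt
  refine ⟨fun t => Real.exp (-∫ s in a..t, c (max s a)), fun t => Real.exp_pos _, fun t ht => ?_⟩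
  refine (((hC t ht).fun_neg.exp.hasDerivWithinAt).mul (hw t ht)).congr_deriv ?_
  ring

lemma pos_of_pos_of_hasDerivWithinAt_linear (hc : ContinuousOn c (Ici a))
    (hw : ∀ t ∈ Ici a, HasDerivWithinAt w (c t * w t + g t) (Ici a) t) (hg : ∀ t > a, 0 ≤ g t)
    (ha : 0 < w a) : ∀ t ∈ Ici a, 0 < w t := by
  obtain ⟨E, hE, hEw⟩ := exists_integratingFactor hc hw
  have hpos := pos_of_pos_of_hasDerivWithinAt_nonneg hEw
    (fun t ht => mul_nonneg (hE t).le (hg t ht)) (mul_pos (hE a) ha)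
  exact fun t ht => pos_of_mul_pos_right (hpos t ht) (hE t).le

lemma pos_of_nonneg_of_hasDerivWithinAt_linear (hc : ContinuousOn c (Ici a))
    (hw : ∀ t ∈ Ici a, HasDerivWithinAt w (c t * w t + g t) (Ici a) t) (hg : ∀ t > a, 0 < g t)
    (ha : 0 ≤ w a) : ∀ t > a, 0 < w t := by
  obtain ⟨E, hE, hEw⟩ := exists_integratingFactor hc hw
  have hpos := pos_of_nonneg_of_hasDerivWithinAt_pos hEw
    (fun t ht => mul_pos (hE t) (hg t ht)) (mul_nonneg (hE a).le ha)
  exact fun t ht => pos_of_mul_pos_right (hpos t ht) (hE t).le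

end Linear

section Linearized

variable {z₁ z₂ z₃ z₄ c Y : ℝ → ℝ} {a : ℝ}

theorem linearized_nonneg (hc : ContinuousOn c (Ici a)) (hY : ContinuousOn Y (Ici a))
    (hY₀ : ∀ t ∈ Ici a, 0 ≤ Y t)
    (hz₁ : ∀ t ∈ Ici a, HasDerivWithinAt z₁ (z₂ t) (Ici a) t)
    (hz₂ : ∀ t ∈ Ici a, HasDerivWithinAt z₂ (4 * z₁ t + z₃ t) (Ici a) t)
    (hz₃ : ∀ t ∈ Ici a, HasDerivWithinAt z₃ (z₄ t) (Ici a) t)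
    (hz₄ : ∀ t ∈ Ici a, HasDerivWithinAt z₄ (c t * z₄ t + Y t * z₁ t) (Ici a) t)
    (h₁ : 0 ≤ z₁ a) (h₂ : 0 ≤ z₂ a) (h₃ : 0 ≤ z₃ a) (h₄ : 0 ≤ z₄ a) :
    ∀ t ∈ Ici a, 0 ≤ z₁ t ∧ 0 ≤ z₂ t ∧ 0 ≤ z₃ t ∧ 0 ≤ z₄ t := by
  have hnn := nonneg_of_hasDerivWithinAt_mulVec (a := a)
    (A := fun t => !![0, 1, 0, 0; 4, 0, 1, 0; 0, 0, 0, 1; Y t, 0, 0, c t])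
    (z := fun t => ![z₁ t, z₂ t, z₃ t, z₄ t]) ?_ ?_ ?_ ?_
  · exact fun t ht => ⟨hnn t ht 0, hnn t ht 1, hnn t ht 2, hnn t ht 3⟩
  · refine continuousOn_pi.2 fun i => continuousOn_pi.2 fun j => ?_
    fin_cases i <;> fin_cases j <;> simp [hc, hY, continuousOn_const]
  · intro t ht i j hij
    fin_cases i <;> fin_cases j <;> simp_all
  · intro t ht
    refine hasDerivWithinAt_pi.2 fun i => ?_
    fin_cases i <;> simp [Matrix.mulVec, dotProduct, Fin.sum_univ_four]
    · exact hz₁ t ht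
    · exact hz₂ t ht
    · exact hz₃ t ht
    · exact (hz₄ t ht).congr_deriv (by ring)
  · intro i
    fin_cases i <;> simpa

theorem linearized_pos (hc : ContinuousOn c (Ici a)) (hY : ∀ t > a, 0 < Y t)
    (hz₁ : ∀ t ∈ Ici a, HasDerivWithinAt z₁ (z₂ t) (Ici a) t)
    (hz₂ : ∀ t ∈ Ici a, HasDerivWithinAt z₂ (4 * z₁ t + z₃ t) (Ici a) t)
    (hz₃ : ∀ t ∈ Ici a, HasDerivWithinAt z₃ (z₄ t) (Ici a) t)
    (hz₄ : ∀ t ∈ Ici a, HasDerivWithinAt z₄ (c t * z₄ t + Y t * z₁ t) (Ici a) t)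
    (hnn : ∀ t ∈ Ici a, 0 ≤ z₁ t ∧ 0 ≤ z₂ t ∧ 0 ≤ z₃ t ∧ 0 ≤ z₄ t)
    (h : 0 < z₁ a ∨ 0 < z₂ a ∨ 0 < z₃ a ∨ 0 < z₄ a) :
    ∀ t > a, 0 < z₁ t ∧ 0 < z₂ t ∧ 0 < z₃ t ∧ 0 < z₄ t := by
  obtain ⟨h₁, h₂, h₃, h₄⟩ := hnn a self_mem_Ici
  have h₂₁ (h : ∀ t > a, 0 < z₂ t) : ∀ t > a, 0 < z₁ t :=
    pos_of_nonneg_of_hasDerivWithinAt_pos hz₁ h h₁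
  have h₃₂ (h : ∀ t > a, 0 < z₃ t) : ∀ t > a, 0 < z₂ t :=
    pos_of_nonneg_of_hasDerivWithinAt_pos hz₂
      (fun t ht => by linarith [(hnn t ht.le).1, h t ht]) h₂
  have h₄₃ (h : ∀ t > a, 0 < z₄ t) : ∀ t > a, 0 < z₃ t :=
    pos_of_nonneg_of_hasDerivWithinAt_pos hz₃ h h₃
  have h₁₄ (h : ∀ t > a, 0 < z₁ t) : ∀ t > a, 0 < z₄ t :=
    pos_of_nonneg_of_hasDerivWithinAt_linear hc hz₄ (fun t ht => mul_pos (hY t ht) (h t ht)) h₄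
  have p₁ : ∀ t > a, 0 < z₁ t := by
    rcases h with h | h | h | h
    · exact fun t ht => pos_of_pos_of_hasDerivWithinAt_nonneg hz₁
        (fun t ht => (hnn t ht.le).2.1) h t ht.le
    · exact h₂₁ fun t ht => pos_of_pos_of_hasDerivWithinAt_nonneg hz₂
        (fun t ht => by linarith [(hnn t ht.le).1, (hnn t ht.le).2.2.1]) h t ht.le
    · exact h₂₁ <| h₃₂ fun t ht => pos_of_pos_of_hasDerivWithinAt_nonneg hz₃
        (fun t ht => (hnn t ht.le).2.2.2) h t ht.le
    · exact h₂₁ <| h₃₂ <| h₄₃ fun t ht => pos_of_pos_of_hasDerivWithinAt_linear hc hz₄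
        (fun t ht => mul_nonneg (hY t ht).le (hnn t ht.le).1) h t ht.le
  have p₄ := h₁₄ p₁
  have p₃ := h₄₃ p₄
  exact fun t ht => ⟨p₁ t ht, h₃₂ p₃ t ht, p₃ t ht, p₄ t ht⟩

end Linearized

/-- Monotonicity lemma for the ODE system `x₁' = x₂`, `x₂' = 4x₁ + x₃`, `x₃' = x₄`,
`x₄' = 4x₁x₄` on `[0, ∞)`: if two solutions `x` and `y` satisfy `y₄(0) > 0` and
`xᵢ(0) ≥ yᵢ(0)` for all `i`, then `xᵢ(t) ≥ yᵢ(t)` for all `t > 0`; moreover if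
`x_j(0) > y_j(0)` for some `j`, then `xᵢ(t) > yᵢ(t)` for all `t > 0` and all `i`. -/
theorem monotonicity_lemma (x₁ x₂ x₃ x₄ y₁ y₂ y₃ y₄ : ℝ → ℝ)
    (hx₁ : ∀ t ∈ Set.Ici (0 : ℝ), HasDerivWithinAt x₁ (x₂ t) (Set.Ici 0) t)
    (hx₂ : ∀ t ∈ Set.Ici (0 : ℝ), HasDerivWithinAt x₂ (4 * x₁ t + x₃ t) (Set.Ici 0) t)
    (hx₃ : ∀ t ∈ Set.Ici (0 : ℝ), HasDerivWithinAt x₃ (x₄ t) (Set.Ici 0) t)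
    (hx₄ : ∀ t ∈ Set.Ici (0 : ℝ), HasDerivWithinAt x₄ (4 * x₁ t * x₄ t) (Set.Ici 0) t)
    (hy₁ : ∀ t ∈ Set.Ici (0 : ℝ), HasDerivWithinAt y₁ (y₂ t) (Set.Ici 0) t)
    (hy₂ : ∀ t ∈ Set.Ici (0 : ℝ), HasDerivWithinAt y₂ (4 * y₁ t + y₃ t) (Set.Ici 0) t)
    (hy₃ : ∀ t ∈ Set.Ici (0 : ℝ), HasDerivWithinAt y₃ (y₄ t) (Set.Ici 0) t)
    (hy₄ : ∀ t ∈ Set.Ici (0 : ℝ), HasDerivWithinAt y₄ (4 * y₁ t * y₄ t) (Set.Ici 0) t)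
    (hy₄0 : 0 < y₄ 0)
    (h₁ : y₁ 0 ≤ x₁ 0) (h₂ : y₂ 0 ≤ x₂ 0) (h₃ : y₃ 0 ≤ x₃ 0) (h₄ : y₄ 0 ≤ x₄ 0) :
    (∀ t > (0 : ℝ), y₁ t ≤ x₁ t ∧ y₂ t ≤ x₂ t ∧ y₃ t ≤ x₃ t ∧ y₄ t ≤ x₄ t) ∧
    ((y₁ 0 < x₁ 0 ∨ y₂ 0 < x₂ 0 ∨ y₃ 0 < x₃ 0 ∨ y₄ 0 < x₄ 0) →
      ∀ t > (0 : ℝ), y₁ t < x₁ t ∧ y₂ t < x₂ t ∧ y₃ t < x₃ t ∧ y₄ t < x₄ t) := by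
  have hcont {f g : ℝ → ℝ} (h : ∀ t ∈ Ici (0 : ℝ), HasDerivWithinAt f (g t) (Ici 0) t) :
      ContinuousOn (fun t => 4 * f t) (Ici 0) :=
    fun t ht => (h t ht).continuousWithinAt.const_mul 4
  have hy₄_pos : ∀ t ∈ Ici (0 : ℝ), 0 < y₄ t :=
    pos_of_pos_of_hasDerivWithinAt_linear (hcont hy₁) (g := 0)
      (fun t ht => (hy₄ t ht).congr_deriv (by simp)) (fun _ _ => le_rfl) hy₄0
  have hz₁ t ht := (hx₁ t ht).sub (hy₁ t ht)
  have hz₂ t ht := ((hx₂ t ht).sub (hy₂ t ht)).congr_deriv (by ring :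
    4 * x₁ t + x₃ t - (4 * y₁ t + y₃ t) = 4 * (x₁ t - y₁ t) + (x₃ t - y₃ t))
  have hz₃ t ht := (hx₃ t ht).sub (hy₃ t ht)
  have hz₄ t ht := ((hx₄ t ht).sub (hy₄ t ht)).congr_deriv (by ring :
    4 * x₁ t * x₄ t - 4 * y₁ t * y₄ t = 4 * x₁ t * (x₄ t - y₄ t) + 4 * y₄ t * (x₁ t - y₁ t))
  have hnn := linearized_nonneg (hcont hx₁) (hcont hy₄)
    (fun t ht => (mul_pos four_pos (hy₄_pos t ht)).le)
    hz₁ hz₂ hz₃ hz₄ (sub_nonneg.2 h₁) (sub_nonneg.2 h₂) (sub_nonneg.2 h₃) (sub_nonneg.2 h₄)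
  refine ⟨fun t ht => by simpa [sub_nonneg] using hnn t ht.le, fun hj t ht => ?_⟩
  simpa [sub_pos] using
    linearized_pos (hcont hx₁) (fun t ht => mul_pos four_pos (hy₄_pos t ht.le))
    hz₁ hz₂ hz₃ hz₄ hnn (by simpa [sub_pos] using hj) t ht
end

section
/- Let p < 0 and q > 0 with 4p + q ≤ 0, and let (x₁, x₂, x₃, x₄) be the solution on [0, ∞) of the ODE system x₁' = x₂, x₂' = 4x₁ + x₃, x₃' = x₄, x₄' = 4x₁x₄ with initial data x₁(0) = 0, x₂(0) = p, x₃(0) = 0, x₄(0) = q. Then x₂(t) < 0 for all t > 0, and x₂(t) → −∞ as t → +∞. -/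
/-!
Write `w = x₃ + 4x₁` (this is `v'''`) and `e = x₄ + 4x₂ - 2w` (this is `w' - 2w`). Along the
system `e' = -2e + 4x₁x₄` and `w' = e + 2w`, while `x₄' = 4x₁x₄` keeps `x₄` positive. So as long
as `x₁ ≤ 0`, Grönwall propagates `e(0) = 4p + q ≤ 0` and `w(0) = 0` to `e ≤ 0` and `w ≤ 0`, hence
`x₂ ≤ p < 0` because `x₂' = w`; this in turn keeps `x₁' = x₂` negative, and continuous induction
gives `x₁ ≤ 0` and `x₂ ≤ p` on all of `[0, ∞)`. Then `x₁(t) ≤ pt`, so `x₃ + x₄ / (4|p|)` is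
nonincreasing for `t ≥ 1`; thus `x₃` is bounded above, `x₂' = 4x₁ + x₃ → -∞`, and `x₂ → -∞`.
-/

open Filter Set Real

section HalfLine

variable {f f' g : ℝ → ℝ} {c a b K : ℝ}

theorem nonpos_of_hasDerivWithinAt_le_mul_self
    (hf : ∀ x ∈ Ici c, HasDerivWithinAt f (f' x) (Ici c) x) (hca : c ≤ a) (ha : f a ≤ 0)
    (bound : ∀ x ∈ Ico a b, f' x ≤ K * f x) : ∀ x ∈ Icc a b, f x ≤ 0 := by
  intro x hx
  have hcont : ContinuousOn f (Icc a b) := fun y hy =>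
    (hf y (hca.trans hy.1)).continuousWithinAt.mono fun z hz => hca.trans hz.1
  have := le_gronwallBound_of_liminf_deriv_right_le (ε := 0) hcont
    (fun y hy _ hr => ((hf y (hca.trans hy.1)).mono
      (Ici_subset_Ici.2 (hca.trans hy.1))).liminf_right_slope_le hr) ha
    (by simpa using bound) x hx
  rwa [gronwallBound_ε0_δ0] at this

theorem le_of_hasDerivWithinAt_nonpos
    (hf : ∀ x ∈ Ici c, HasDerivWithinAt f (f' x) (Ici c) x) (hca : c ≤ a)
    (bound : ∀ x ∈ Ico a b, f' x ≤ 0) : ∀ x ∈ Icc a b, f x ≤ f a := by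
  intro x hx
  have := nonpos_of_hasDerivWithinAt_le_mul_self (f := fun y => f y - f a) (K := 0)
    (fun y hy => (hf y hy).sub_const (f a)) hca (by simp) (by simpa using bound) x hx
  linarith

theorem pos_of_hasDerivWithinAt_mul_self
    (hf : ∀ x ∈ Ici c, HasDerivWithinAt f (g x * f x) (Ici c) x) (hg : ContinuousOn g (Ici c))
    (hc : 0 < f c) : ∀ x ∈ Ici c, 0 < f x := by
  intro b hb
  obtain ⟨C, hC⟩ := (isCompact_Icc (a := c) (b := b)).exists_bound_of_continuousOn
    (hg.mono Icc_subset_Ici_self)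
  -- `-f` stays below the barrier `-f c * exp (-(C + 1) * (x - c))`, since `|g| ≤ C` on `[c, b]`.
  set B : ℝ → ℝ := fun x => -f c * exp (-(C + 1) * (x - c))
  have hB : ∀ x, HasDerivAt B ((C + 1) * (f c * exp (-(C + 1) * (x - c)))) x := by
    intro x
    exact ((((hasDerivAt_id x).sub_const c).const_mul (-(C + 1))).exp.const_mul (-f c)).congr_deriv
      (by simp only [id]; ring)
  have hle := image_le_of_deriv_right_lt_deriv_boundary' (f := fun x => -f x) (B := B)
    (fun x hx => (hf x hx.1).continuousWithinAt.neg.mono Icc_subset_Ici_self)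
    (fun x hx => ((hf x hx.1).mono (Ici_subset_Ici.2 hx.1)).neg) (by simp [B])
    (fun x _ => (hB x).continuousAt.continuousWithinAt)
    (fun x _ => (hB x).hasDerivWithinAt) ?_ ⟨hb, le_rfl⟩
  · have : B b < 0 := by simp only [B]; nlinarith [exp_pos (-(C + 1) * (b - c))]
    linarith
  · intro x hx hfx
    have hgx := neg_abs_le (g x)
    have hCx : |g x| ≤ C := by simpa using hC x (Ico_subset_Icc_self hx)
    have hfx' : f x = f c * exp (-(C + 1) * (x - c)) := by simp only [B] at hfx; linarith
    have hpos : 0 < f x := hfx' ▸ mul_pos hc (exp_pos _)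
    rw [← hfx']
    nlinarith

theorem tendsto_atBot_of_hasDerivWithinAt_tendsto_atBot
    (hf : ∀ x ∈ Ici c, HasDerivWithinAt f (f' x) (Ici c) x) (hf' : Tendsto f' atTop atBot) :
    Tendsto f atTop atBot := by
  obtain ⟨N, hN⟩ := eventually_atTop.1 (hf'.eventually_le_atBot (-1))
  set T := max c N
  have hle : ∀ t ∈ Ici T, f t ≤ f T + T + -t := by
    intro t ht
    have := le_of_hasDerivWithinAt_nonpos (f := fun x => f x + x)
      (fun x hx => (hf x hx).add (hasDerivWithinAt_id x _)) (le_max_left c N)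
      (fun x hx => by linarith [hN x ((le_max_right c N).trans hx.1)]) t ⟨ht, le_rfl⟩
    linarith
  refine tendsto_atBot_mono' atTop ?_
    (tendsto_atBot_add_const_left atTop (f T + T) tendsto_neg_atTop_atBot)
  filter_upwards [eventually_ge_atTop T] with t ht using hle t ht

end HalfLine

structure IsQCurvatureSystemSolution (x₁ x₂ x₃ x₄ : ℝ → ℝ) : Prop where
  hasDerivWithinAt₁ : ∀ t ∈ Ici (0 : ℝ), HasDerivWithinAt x₁ (x₂ t) (Ici 0) t
  hasDerivWithinAt₂ : ∀ t ∈ Ici (0 : ℝ), HasDerivWithinAt x₂ (4 * x₁ t + x₃ t) (Ici 0) t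
  hasDerivWithinAt₃ : ∀ t ∈ Ici (0 : ℝ), HasDerivWithinAt x₃ (x₄ t) (Ici 0) t
  hasDerivWithinAt₄ : ∀ t ∈ Ici (0 : ℝ), HasDerivWithinAt x₄ (4 * x₁ t * x₄ t) (Ici 0) t

namespace IsQCurvatureSystemSolution

variable {x₁ x₂ x₃ x₄ : ℝ → ℝ}

theorem x₄_pos (h : IsQCurvatureSystemSolution x₁ x₂ x₃ x₄) (h₄ : 0 < x₄ 0) :
    ∀ t ∈ Ici 0, 0 < x₄ t :=
  pos_of_hasDerivWithinAt_mul_self h.hasDerivWithinAt₄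
    (continuousOn_const.mul fun t ht => (h.hasDerivWithinAt₁ t ht).continuousWithinAt) h₄

theorem hasDerivWithinAt_x₃_add_four_mul_x₁ (h : IsQCurvatureSystemSolution x₁ x₂ x₃ x₄) :
    ∀ t ∈ Ici (0 : ℝ), HasDerivWithinAt (fun s => x₃ s + 4 * x₁ s)
      ((x₄ t + 4 * x₂ t - 2 * (x₃ t + 4 * x₁ t)) + 2 * (x₃ t + 4 * x₁ t)) (Ici 0) t := fun t ht =>
  ((h.hasDerivWithinAt₃ t ht).add ((h.hasDerivWithinAt₁ t ht).const_mul 4)).congr_deriv (by ring)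

theorem hasDerivWithinAt_x₄_add_four_mul_x₂_sub_two_mul
    (h : IsQCurvatureSystemSolution x₁ x₂ x₃ x₄) :
    ∀ t ∈ Ici (0 : ℝ), HasDerivWithinAt (fun s => x₄ s + 4 * x₂ s - 2 * (x₃ s + 4 * x₁ s))
      (-2 * (x₄ t + 4 * x₂ t - 2 * (x₃ t + 4 * x₁ t)) + 4 * x₁ t * x₄ t) (Ici 0) t := fun t ht =>
  (((h.hasDerivWithinAt₄ t ht).add ((h.hasDerivWithinAt₂ t ht).const_mul 4)).sub
    ((h.hasDerivWithinAt_x₃_add_four_mul_x₁ t ht).const_mul 2)).congr_deriv (by ring)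

theorem x₂_le_of_x₁_nonpos (h : IsQCurvatureSystemSolution x₁ x₂ x₃ x₄) (h₄ : 0 < x₄ 0)
    (hw₀ : x₃ 0 + 4 * x₁ 0 ≤ 0) (he₀ : x₄ 0 + 4 * x₂ 0 - 2 * (x₃ 0 + 4 * x₁ 0) ≤ 0) {T : ℝ}
    (hx₁ : ∀ t ∈ Icc 0 T, x₁ t ≤ 0) : ∀ t ∈ Icc 0 T, x₂ t ≤ x₂ 0 := by
  have he : ∀ t ∈ Icc 0 T, x₄ t + 4 * x₂ t - 2 * (x₃ t + 4 * x₁ t) ≤ 0 :=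
    nonpos_of_hasDerivWithinAt_le_mul_self (K := -2)
      h.hasDerivWithinAt_x₄_add_four_mul_x₂_sub_two_mul le_rfl he₀ fun t ht => by
        nlinarith [hx₁ t (Ico_subset_Icc_self ht), h.x₄_pos h₄ t ht.1]
  have hw : ∀ t ∈ Icc 0 T, x₃ t + 4 * x₁ t ≤ 0 :=
    nonpos_of_hasDerivWithinAt_le_mul_self (K := 2) h.hasDerivWithinAt_x₃_add_four_mul_x₁ le_rfl hw₀
      fun t ht => by linarith [he t (Ico_subset_Icc_self ht)]
  exact le_of_hasDerivWithinAt_nonpos (b := T) h.hasDerivWithinAt₂ le_rfl fun t ht => by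
    linarith [hw t (Ico_subset_Icc_self ht)]

theorem x₁_nonpos (h : IsQCurvatureSystemSolution x₁ x₂ x₃ x₄) (h₁ : x₁ 0 ≤ 0) (h₂ : x₂ 0 < 0)
    (h₄ : 0 < x₄ 0) (hw₀ : x₃ 0 + 4 * x₁ 0 ≤ 0)
    (he₀ : x₄ 0 + 4 * x₂ 0 - 2 * (x₃ 0 + 4 * x₁ 0) ≤ 0) : ∀ t ∈ Ici 0, x₁ t ≤ 0 := by
  intro b hb
  have hclosed : IsClosed (x₁ ⁻¹' Iic 0 ∩ Icc 0 b) := by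
    rw [inter_comm]
    exact ContinuousOn.preimage_isClosed_of_isClosed
      (fun t ht => (h.hasDerivWithinAt₁ t ht.1).continuousWithinAt.mono Icc_subset_Ici_self)
      isClosed_Icc isClosed_Iic
  refine hclosed.Icc_subset_of_forall_mem_nhdsGT_of_Icc_subset h₁ (fun t ht hsub => ?_)
    ⟨hb, le_rfl⟩
  -- `x₁ ≤ 0` up to `t` forces `x₁' (t) = x₂ t ≤ x₂ 0 < 0`, so `x₁` keeps decreasing after `t`.
  have hx₂t : x₂ t < 0 :=
    (h.x₂_le_of_x₁_nonpos h₄ hw₀ he₀ hsub t ⟨ht.1, le_rfl⟩).trans_lt h₂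
  have hslope := (((h.hasDerivWithinAt₁ t ht.1).mono
    (Ici_subset_Ici.2 ht.1)).Ioi_of_Ici.limsup_slope_le' (lt_irrefl t) hx₂t)
  filter_upwards [hslope, self_mem_nhdsWithin] with z hz htz
  exact ((slope_neg_iff_of_le (le_of_lt htz)).1 hz).le.trans (hsub ⟨ht.1, le_rfl⟩)

theorem x₂_le (h : IsQCurvatureSystemSolution x₁ x₂ x₃ x₄) (h₁ : x₁ 0 ≤ 0) (h₂ : x₂ 0 < 0)
    (h₄ : 0 < x₄ 0) (hw₀ : x₃ 0 + 4 * x₁ 0 ≤ 0)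
    (he₀ : x₄ 0 + 4 * x₂ 0 - 2 * (x₃ 0 + 4 * x₁ 0) ≤ 0) : ∀ t ∈ Ici 0, x₂ t ≤ x₂ 0 :=
  fun t ht => h.x₂_le_of_x₁_nonpos h₄ hw₀ he₀
    (fun s hs => h.x₁_nonpos h₁ h₂ h₄ hw₀ he₀ s hs.1) t ⟨ht, le_rfl⟩

theorem x₃_le_of_x₁_le_neg (h : IsQCurvatureSystemSolution x₁ x₂ x₃ x₄) (h₄ : 0 < x₄ 0) {a k : ℝ}
    (ha : 0 ≤ a) (hk : 0 < k) (hx₁ : ∀ t ∈ Ici a, x₁ t ≤ -k) :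
    ∀ t ∈ Ici a, x₃ t ≤ x₃ a + x₄ a / (4 * k) := by
  intro t ht
  -- `x₃ + x₄ / (4k)` has derivative `x₄ (1 + x₁ / k) ≤ 0`.
  have hG := le_of_hasDerivWithinAt_nonpos (f := fun s => x₃ s + x₄ s / (4 * k)) (b := t)
    (fun s hs => (h.hasDerivWithinAt₃ s hs).add ((h.hasDerivWithinAt₄ s hs).div_const _)) ha
    (fun s hs => by
      have hx₄s := h.x₄_pos h₄ s (ha.trans hs.1)
      have hx₁s : x₁ s / k ≤ -1 := by rw [div_le_iff₀ hk]; linarith [hx₁ s hs.1]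
      rw [show x₄ s + 4 * x₁ s * x₄ s / (4 * k) = x₄ s * (1 + x₁ s / k) by field_simp]
      exact mul_nonpos_of_nonneg_of_nonpos hx₄s.le (by linarith)) t ⟨ht, le_rfl⟩
  have : 0 ≤ x₄ t / (4 * k) := div_nonneg (h.x₄_pos h₄ t (ha.trans ht)).le (by positivity)
  linarith

theorem tendsto_x₂_atBot (h : IsQCurvatureSystemSolution x₁ x₂ x₃ x₄) (h₁ : x₁ 0 ≤ 0)
    (h₄ : 0 < x₄ 0) {m : ℝ} (hm : m < 0) (hx₂ : ∀ t ∈ Ici 0, x₂ t ≤ m) :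
    Tendsto x₂ atTop atBot := by
  have hx₁ : ∀ t ∈ Ici 0, x₁ t ≤ m * t := by
    intro t ht
    have := nonpos_of_hasDerivWithinAt_le_mul_self (f := fun s => x₁ s - m * s) (K := 0) (b := t)
      (fun s hs => (h.hasDerivWithinAt₁ s hs).sub ((hasDerivWithinAt_id s _).const_mul m)) le_rfl
      (by simpa using h₁) (fun s hs => by simpa using hx₂ s hs.1) t ⟨ht, le_rfl⟩
    linarith
  have hx₃ := h.x₃_le_of_x₁_le_neg h₄ zero_le_one (neg_pos.2 hm) fun t ht => by
    nlinarith [hx₁ t (mem_Ici.2 (zero_le_one.trans ht)), mem_Ici.1 ht]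
  refine tendsto_atBot_of_hasDerivWithinAt_tendsto_atBot h.hasDerivWithinAt₂ ?_
  refine tendsto_atBot_mono' atTop ?_ (tendsto_atBot_add_const_right atTop (x₃ 1 + x₄ 1 / (4 * -m))
    (tendsto_id.const_mul_atTop_of_neg (by linarith : 4 * m < 0)))
  filter_upwards [eventually_ge_atTop 1] with t ht
  simp only [id]
  linarith [hx₁ t (mem_Ici.2 (zero_le_one.trans ht)), hx₃ t ht]

end IsQCurvatureSystemSolution

/-- For `p < 0`, `q > 0` with `4p + q ≤ 0`, the solution on `[0, ∞)` of the system
`x₁' = x₂`, `x₂' = 4x₁ + x₃`, `x₃' = x₄`, `x₄' = 4x₁x₄` with initial data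
`(0, p, 0, q)` satisfies `x₂(t) < 0` for all `t > 0` and `x₂(t) → −∞` as `t → +∞`. -/
theorem x₂_negative_and_tendsto_atBot (p q : ℝ) (hp : p < 0) (hq : 0 < q)
    (hpq : 4 * p + q ≤ 0)
    (x₁ x₂ x₃ x₄ : ℝ → ℝ)
    (hx₁ : ∀ t ∈ Set.Ici (0 : ℝ), HasDerivWithinAt x₁ (x₂ t) (Set.Ici 0) t)
    (hx₂ : ∀ t ∈ Set.Ici (0 : ℝ), HasDerivWithinAt x₂ (4 * x₁ t + x₃ t) (Set.Ici 0) t)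
    (hx₃ : ∀ t ∈ Set.Ici (0 : ℝ), HasDerivWithinAt x₃ (x₄ t) (Set.Ici 0) t)
    (hx₄ : ∀ t ∈ Set.Ici (0 : ℝ), HasDerivWithinAt x₄ (4 * x₁ t * x₄ t) (Set.Ici 0) t)
    (hi₁ : x₁ 0 = 0) (hi₂ : x₂ 0 = p) (hi₃ : x₃ 0 = 0) (hi₄ : x₄ 0 = q) :
    (∀ t > (0 : ℝ), x₂ t < 0) ∧ Tendsto x₂ atTop atBot := by
  have h : IsQCurvatureSystemSolution x₁ x₂ x₃ x₄ := ⟨hx₁, hx₂, hx₃, hx₄⟩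
  have h₂ : x₂ 0 < 0 := hi₂ ▸ hp
  have h₄ : 0 < x₄ 0 := hi₄ ▸ hq
  have hx₂_le := h.x₂_le hi₁.le h₂ h₄ (by simp [hi₁, hi₃])
    (by rw [hi₁, hi₂, hi₃, hi₄]; linarith)
  exact ⟨fun t ht => (hx₂_le t ht.le).trans_lt h₂, h.tendsto_x₂_atBot hi₁.le h₄ h₂ hx₂_le⟩
end

section
/- Let (x₁, x₂, x₃, x₄) and (y₁, y₂, y₃, y₄) be solutions on ℝ of the ODE system x₁' = x₂, x₂' = 4x₁ + x₃, x₃' = x₄, x₄' = 4x₁x₄, both bounded on ℝ (each component bounded), with x₄ > 0 and y₄ > 0 everywhere, and sharing the same value of the first integral: 2x₂² − 8x₁² − 4x₁x₃ + x₄ = 2y₂² − 8y₁² − 4y₁y₃ + y₄ = c. Then the two solutions agree up to a translation in t: there exists t₀ ∈ ℝ such that yᵢ(t) = xᵢ(t + t₀) for all t ∈ ℝ and i = 1, 2, 3, 4. -/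
/-!
Along a solution, `ψ = 4x₁ + x₃ + 2x₂` and `φ = 4x₁ + x₃ - 2x₂` satisfy `ψ' = 2ψ + x₄` and
`φ' = -2φ + x₄`; since they are bounded and `x₄ > 0`, this forces `ψ < 0 < φ`, so `x₂ < 0` and
`x₁` is strictly decreasing. Letting `t → ±∞` in the first integral shows that `x₁` decreases
from `√(c/8)` to `-√(c/8)`. Hence `x₁` and `y₁` have the same range, and `θ = x₁⁻¹ ∘ y₁` is an
increasing `C¹` bijection of `ℝ`. The function `W = (x₂ ∘ θ)² - y₂²` vanishes at `±∞` and
`W' = 2y₂ (x₃ ∘ θ - y₃)`. At a positive maximum of `W` we get `x₃ ∘ θ = y₃`, so the first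
integral gives `x₄ ∘ θ < y₄` and `W'' > 0`, which is impossible; hence `W ≤ 0`, and `W = 0` by
symmetry. Then `θ' = y₂ / (x₂ ∘ θ) = 1`, so `θ` is a translation, and `W' = 0` together with
the first integral identifies the remaining components.
-/

open Filter Set Function Topology

section Calculus

variable {f f' : ℝ → ℝ}

theorem exists_mem_Ioo_hasDerivAt_eq_sub (hf : ∀ t, HasDerivAt f (f' t) t) (t : ℝ) :
    ∃ ξ ∈ Ioo t (t + 1), f' ξ = f (t + 1) - f t := by
  obtain ⟨ξ, hξ, h⟩ := exists_hasDerivAt_eq_slope f f' (lt_add_one t)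
    (fun s _ => (hf s).continuousAt.continuousWithinAt) (fun s _ => hf s)
  exact ⟨ξ, hξ, by rw [h, add_sub_cancel_left, div_one]⟩

theorem eq_zero_of_tendsto_of_tendsto_deriv {α m : ℝ} (hf : ∀ t, HasDerivAt f (f' t) t)
    (hα : Tendsto f atTop (𝓝 α)) (hm : Tendsto f' atTop (𝓝 m)) : m = 0 := by
  choose ξ hξ hξf using exists_mem_Ioo_hasDerivAt_eq_sub hf
  have hξ_top : Tendsto ξ atTop atTop := tendsto_atTop_mono (fun t => (hξ t).1.le) tendsto_id
  have hdiff : Tendsto (fun t => f (t + 1) - f t) atTop (𝓝 (α - α)) :=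
    (hα.comp (tendsto_atTop_add_const_right _ 1 tendsto_id)).sub hα
  rw [sub_self, ← funext hξf] at hdiff
  exact tendsto_nhds_unique (hm.comp hξ_top) hdiff

theorem tendsto_deriv_zero_of_antitone_exp_mul {α μ : ℝ} (hf : ∀ t, HasDerivAt f (f' t) t)
    (hα : Tendsto f atTop (𝓝 α)) (hμ : 0 ≤ μ) (hf'_nonpos : ∀ t, f' t ≤ 0)
    (hanti : Antitone fun t => Real.exp (μ * t) * f' t) : Tendsto f' atTop (𝓝 0) := by
  choose ξ hξ hξf using exists_mem_Ioo_hasDerivAt_eq_sub hf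
  have hlower : ∀ t, Real.exp μ * (f (t + 1) - f t) ≤ f' t := by
    intro t
    rw [← hξf]
    have hmono := hanti (hξ t).1.le
    have hexp : Real.exp (μ * (ξ t - t)) ≤ Real.exp μ :=
      Real.exp_le_exp.2 (by nlinarith [(hξ t).2])
    calc Real.exp μ * f' (ξ t) ≤ Real.exp (μ * (ξ t - t)) * f' (ξ t) :=
          mul_le_mul_of_nonpos_right hexp (hf'_nonpos _)
      _ = Real.exp (-(μ * t)) * (Real.exp (μ * ξ t) * f' (ξ t)) := by
          rw [← mul_assoc, ← Real.exp_add]; ring_nf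
      _ ≤ Real.exp (-(μ * t)) * (Real.exp (μ * t) * f' t) :=
          mul_le_mul_of_nonneg_left hmono (Real.exp_pos _).le
      _ = f' t := by rw [← mul_assoc, ← Real.exp_add, neg_add_cancel, Real.exp_zero, one_mul]
  have hdiff : Tendsto (fun t => Real.exp μ * (f (t + 1) - f t)) atTop (𝓝 (Real.exp μ * (α - α))) :=
    ((hα.comp (tendsto_atTop_add_const_right _ 1 tendsto_id)).sub hα).const_mul _
  rw [sub_self, mul_zero] at hdiff
  exact tendsto_of_tendsto_of_tendsto_of_le_of_le hdiff tendsto_const_nhds hlower hf'_nonpos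

theorem neg_of_bounded_of_mul_lt_deriv {μ M : ℝ} (hf : ∀ t, HasDerivAt f (f' t) t)
    (hM : ∀ t, |f t| ≤ M) (hμ : 0 < μ) (h : ∀ t, μ * f t < f' t) (t : ℝ) : f t < 0 := by
  set g := fun s => Real.exp (-μ * s) * f s
  have hg_mono : StrictMono g := by
    refine strictMono_of_deriv_pos fun s => ?_
    have hd : HasDerivAt g (Real.exp (-μ * s) * (f' s - μ * f s)) s := by
      have hexp := ((hasDerivAt_id' s).const_mul (-μ)).exp
      exact (hexp.mul (hf s)).congr_deriv (by ring)
    rw [hd.deriv]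
    exact mul_pos (Real.exp_pos _) (sub_pos.2 (h s))
  have hg_lim : Tendsto g atTop (𝓝 0) := by
    have hexp : Tendsto (fun s => M * Real.exp (-μ * s)) atTop (𝓝 0) := by
      simpa using (Real.tendsto_exp_atBot.comp
        (tendsto_id.const_mul_atTop_of_neg (neg_lt_zero.2 hμ))).const_mul M
    refine squeeze_zero_norm (fun s => ?_) hexp
    rw [norm_mul, Real.norm_eq_abs, Real.abs_exp, Real.norm_eq_abs, mul_comm]
    exact mul_le_mul_of_nonneg_right (hM s) (Real.exp_pos _).le
  have hgt : g t < 0 := (hg_mono (lt_add_one t)).trans_le (hg_mono.monotone.ge_of_tendsto hg_lim _)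
  exact neg_of_mul_neg_right hgt (Real.exp_pos _).le

theorem pos_of_bounded_of_mul_lt_deriv {μ M : ℝ} (hf : ∀ t, HasDerivAt f (f' t) t)
    (hM : ∀ t, |f t| ≤ M) (hμ : μ < 0) (h : ∀ t, μ * f t < f' t) (t : ℝ) : 0 < f t := by
  have hrefl : ∀ s, HasDerivAt (fun s => -f (-s)) (f' (-s)) s := fun s =>
    ((hf (-s)).comp s (hasDerivAt_neg s)).neg.congr_deriv (by ring)
  have := neg_of_bounded_of_mul_lt_deriv hrefl (fun s => by simpa using hM (-s))
    (neg_pos.2 hμ) (fun s => by linarith [h (-s)]) (-t)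
  simpa using this

end Calculus

theorem HasStrictDerivAt.hasDerivAt_of_comp_eq {𝕜 : Type*} [NontriviallyNormedField 𝕜]
    [CompleteSpace 𝕜] {f g k : 𝕜 → 𝕜} {f' k' a : 𝕜} (hf : HasStrictDerivAt f f' (g a))
    (hf' : f' ≠ 0) (hg : ContinuousAt g a) (hk : HasDerivAt k k' a)
    (hfg : ∀ᶠ x in 𝓝 a, f (g x) = k x) : HasDerivAt g (f'⁻¹ * k') a := by
  have hka : f (g a) = k a := hfg.self_of_nhds
  have hinv : HasDerivAt (hf.localInverse f f' (g a) hf' ∘ k) (f'⁻¹ * k') a := by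
    have := (hf.to_localInverse hf').hasDerivAt
    rw [hka] at this
    exact this.comp a hk
  refine hinv.congr_of_eventuallyEq ?_
  filter_upwards [hg.eventually (hf.eventually_left_inverse hf'), hfg] with x hx hfx
  rw [comp_apply, ← hfx, hx]

theorem not_isLocalMax_of_deriv_deriv_pos {f : ℝ → ℝ} {x₀ : ℝ} (hf : 0 < deriv (deriv f) x₀)
    (hd : deriv f x₀ = 0) (hc : ContinuousAt f x₀) : ¬IsLocalMax f x₀ := by
  intro hmax
  have hmin := isLocalMin_of_deriv_deriv_pos hf hd hc
  have hconst : f =ᶠ[𝓝 x₀] fun _ => f x₀ := by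
    filter_upwards [hmax, hmin] with x h₁ h₂ using le_antisymm h₁ h₂
  have hderiv : deriv f =ᶠ[𝓝 x₀] fun _ => 0 := by
    filter_upwards [hconst.eventuallyEq_nhds] with x hx
    rw [hx.deriv_eq, deriv_const]
  rw [hderiv.deriv_eq, deriv_const] at hf
  exact hf.false

theorem StrictAnti.range_eq_Ioo_of_tendsto {α β : Type*} [LinearOrder α] [TopologicalSpace α]
    [PreconnectedSpace α] [Nonempty α] [NoMaxOrder α] [NoMinOrder α] [LinearOrder β]
    [TopologicalSpace β] [OrderClosedTopology β] {f : α → β} {a b : β} (hf : StrictAnti f)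
    (hc : Continuous f) (ha : Tendsto f atTop (𝓝 a)) (hb : Tendsto f atBot (𝓝 b)) :
    range f = Ioo a b := by
  refine Subset.antisymm ?_ ?_
  · rintro _ ⟨t, rfl⟩
    obtain ⟨s, hs⟩ := exists_gt t
    obtain ⟨r, hr⟩ := exists_lt t
    exact ⟨(hf.antitone.le_of_tendsto ha s).trans_lt (hf hs),
      (hf hr).trans_le (hf.antitone.ge_of_tendsto hb r)⟩
  · simpa using isPreconnected_univ.intermediate_value_Ioo (le_principal_iff.2 univ_mem)
      (le_principal_iff.2 univ_mem) hc.continuousOn ha hb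

structure BoundedSolution (x₁ x₂ x₃ x₄ : ℝ → ℝ) (c : ℝ) : Prop where
  hasDerivAt₁ : ∀ t, HasDerivAt x₁ (x₂ t) t
  hasDerivAt₂ : ∀ t, HasDerivAt x₂ (4 * x₁ t + x₃ t) t
  hasDerivAt₃ : ∀ t, HasDerivAt x₃ (x₄ t) t
  bounded : ∃ M, ∀ t, |x₁ t| ≤ M ∧ |x₂ t| ≤ M ∧ |x₃ t| ≤ M
  pos : ∀ t, 0 < x₄ t
  energy : ∀ t, 2 * x₂ t ^ 2 - 8 * x₁ t ^ 2 - 4 * x₁ t * x₃ t + x₄ t = c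

namespace BoundedSolution

section Single

variable {x₁ x₂ x₃ x₄ : ℝ → ℝ} {c : ℝ} (hx : BoundedSolution x₁ x₂ x₃ x₄ c)
include hx

theorem reflect :
    BoundedSolution (fun t => -x₁ (-t)) (fun t => x₂ (-t)) (fun t => -x₃ (-t)) (fun t => x₄ (-t))
      c := by
  have hneg : ∀ t : ℝ, HasDerivAt (fun s => -s) (-1) t := hasDerivAt_neg
  obtain ⟨M, hM⟩ := hx.bounded
  refine ⟨fun t => ?_, fun t => ?_, fun t => ?_, ⟨M, fun t => ?_⟩, fun t => hx.pos (-t),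
    fun t => ?_⟩
  · exact ((hx.hasDerivAt₁ (-t)).comp t (hneg t)).neg.congr_deriv (by ring)
  · exact ((hx.hasDerivAt₂ (-t)).comp t (hneg t)).congr_deriv (by ring)
  · exact ((hx.hasDerivAt₃ (-t)).comp t (hneg t)).neg.congr_deriv (by ring)
  · simpa only [abs_neg] using hM (-t)
  · linarith [hx.energy (-t)]

theorem add_two_mul_x₂_neg (t : ℝ) : 4 * x₁ t + x₃ t + 2 * x₂ t < 0 := by
  obtain ⟨M, hM⟩ := hx.bounded
  have hderiv : ∀ s, HasDerivAt (fun s => 4 * x₁ s + x₃ s + 2 * x₂ s)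
      (4 * x₂ s + x₄ s + 2 * (4 * x₁ s + x₃ s)) s := fun s =>
    (((hx.hasDerivAt₁ s).const_mul 4).add (hx.hasDerivAt₃ s)).add ((hx.hasDerivAt₂ s).const_mul 2)
  refine neg_of_bounded_of_mul_lt_deriv (M := 7 * M) hderiv (fun s => ?_) two_pos
    (fun s => by linarith [hx.pos s]) t
  obtain ⟨h₁, h₂, h₃⟩ := hM s
  rw [abs_le] at h₁ h₂ h₃ ⊢
  constructor <;> linarith

theorem sub_two_mul_x₂_pos (t : ℝ) : 0 < 4 * x₁ t + x₃ t - 2 * x₂ t := by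
  obtain ⟨M, hM⟩ := hx.bounded
  have hderiv : ∀ s, HasDerivAt (fun s => 4 * x₁ s + x₃ s - 2 * x₂ s)
      (4 * x₂ s + x₄ s - 2 * (4 * x₁ s + x₃ s)) s := fun s =>
    (((hx.hasDerivAt₁ s).const_mul 4).add (hx.hasDerivAt₃ s)).sub ((hx.hasDerivAt₂ s).const_mul 2)
  refine pos_of_bounded_of_mul_lt_deriv (μ := -2) (M := 7 * M) hderiv (fun s => ?_)
    (by norm_num) (fun s => by linarith [hx.pos s]) t
  obtain ⟨h₁, h₂, h₃⟩ := hM s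
  rw [abs_le] at h₁ h₂ h₃ ⊢
  constructor <;> linarith

theorem x₂_neg (t : ℝ) : x₂ t < 0 := by
  linarith [hx.add_two_mul_x₂_neg t, hx.sub_two_mul_x₂_pos t]

theorem strictAnti_x₁ : StrictAnti x₁ :=
  strictAnti_of_deriv_neg fun t => by rw [(hx.hasDerivAt₁ t).deriv]; exact hx.x₂_neg t

theorem exists_tendsto_x₁_atTop : ∃ α, Tendsto x₁ atTop (𝓝 α) := by
  obtain ⟨M, hM⟩ := hx.bounded
  exact ⟨_, tendsto_atTop_ciInf hx.strictAnti_x₁.antitone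
    ⟨-M, by rintro _ ⟨t, rfl⟩; exact neg_le_of_abs_le (hM t).1⟩⟩

theorem tendsto_x₂_atTop : Tendsto x₂ atTop (𝓝 0) := by
  obtain ⟨α, hα⟩ := hx.exists_tendsto_x₁_atTop
  refine tendsto_deriv_zero_of_antitone_exp_mul hx.hasDerivAt₁ hα zero_le_two
    (fun t => (hx.x₂_neg t).le) (strictAnti_of_deriv_neg fun t => ?_).antitone
  have hd : HasDerivAt (fun s => Real.exp (2 * s) * x₂ s)
      (Real.exp (2 * t) * (4 * x₁ t + x₃ t + 2 * x₂ t)) t :=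
    (((hasDerivAt_id' t).const_mul 2).exp.mul (hx.hasDerivAt₂ t)).congr_deriv (by ring)
  rw [hd.deriv]
  exact mul_neg_of_pos_of_neg (Real.exp_pos _) (hx.add_two_mul_x₂_neg t)

theorem energy_eq_of_tendsto_x₁_atTop {α : ℝ} (hα : Tendsto x₁ atTop (𝓝 α)) : c = 8 * α ^ 2 := by
  obtain ⟨M, hM⟩ := hx.bounded
  have hx₃_mono : StrictMono x₃ :=
    strictMono_of_deriv_pos fun t => by rw [(hx.hasDerivAt₃ t).deriv]; exact hx.pos t
  obtain ⟨L, hL⟩ : ∃ L, Tendsto x₃ atTop (𝓝 L) := ⟨_, tendsto_atTop_ciSup hx₃_mono.monotone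
    ⟨M, by rintro _ ⟨t, rfl⟩; exact le_of_abs_le (hM t).2.2⟩⟩
  have hL_eq : 4 * α + L = 0 := eq_zero_of_tendsto_of_tendsto_deriv hx.hasDerivAt₂
    hx.tendsto_x₂_atTop ((hα.const_mul 4).add hL)
  have hx₄ : Tendsto x₄ atTop (𝓝 (c - 2 * 0 ^ 2 + 8 * α ^ 2 + 4 * α * L)) := by
    have hx₄_eq : x₄ = fun t => c - 2 * x₂ t ^ 2 + 8 * x₁ t ^ 2 + 4 * x₁ t * x₃ t := by
      funext t; linarith [hx.energy t]
    rw [hx₄_eq]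
    exact ((tendsto_const_nhds.sub ((hx.tendsto_x₂_atTop.pow 2).const_mul 2)).add
      ((hα.pow 2).const_mul 8)).add ((hα.const_mul 4).mul hL)
  have := eq_zero_of_tendsto_of_tendsto_deriv hx.hasDerivAt₃ hL hx₄
  rw [show L = -4 * α by linarith] at this
  linarith

theorem tendsto_x₁ :
    Tendsto x₁ atTop (𝓝 (-√(c / 8))) ∧ Tendsto x₁ atBot (𝓝 √(c / 8)) := by
  obtain ⟨α, hα⟩ := hx.exists_tendsto_x₁_atTop
  obtain ⟨β, hβ⟩ := hx.reflect.exists_tendsto_x₁_atTop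
  have hβ' : Tendsto x₁ atBot (𝓝 (-β)) := by
    simpa using (hβ.comp tendsto_neg_atBot_atTop).neg
  have hαβ : α < -β := (hx.strictAnti_x₁.antitone.le_of_tendsto hα 1).trans_lt
    ((hx.strictAnti_x₁ one_pos).trans_le (hx.strictAnti_x₁.antitone.ge_of_tendsto hβ' 0))
  have hc₁ := hx.energy_eq_of_tendsto_x₁_atTop hα
  have hc₂ := hx.reflect.energy_eq_of_tendsto_x₁_atTop hβ
  have hβ_eq : α = β := by nlinarith
  have hsqrt : √(c / 8) = -α := by
    rw [hc₁, mul_div_cancel_left₀ _ (by norm_num : (8 : ℝ) ≠ 0), Real.sqrt_sq_eq_abs,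
      abs_of_neg (by linarith)]
  rw [hsqrt, neg_neg, hβ_eq]
  exact ⟨hβ_eq ▸ hα, hβ'⟩

theorem range_x₁ : range x₁ = Ioo (-√(c / 8)) √(c / 8) :=
  hx.strictAnti_x₁.range_eq_Ioo_of_tendsto (continuous_iff_continuousAt.2 fun t =>
    (hx.hasDerivAt₁ t).continuousAt) hx.tendsto_x₁.1 hx.tendsto_x₁.2

theorem tendsto_x₂_cocompact : Tendsto x₂ (cocompact ℝ) (𝓝 0) := by
  rw [cocompact_eq_atBot_atTop]
  refine tendsto_sup.2 ⟨?_, hx.tendsto_x₂_atTop⟩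
  simpa [comp_def] using hx.reflect.tendsto_x₂_atTop.comp tendsto_neg_atBot_atTop

end Single

section Pair

variable {x₁ x₂ x₃ x₄ y₁ y₂ y₃ y₄ : ℝ → ℝ} {c : ℝ} (hx : BoundedSolution x₁ x₂ x₃ x₄ c)
  (hy : BoundedSolution y₁ y₂ y₃ y₄ c)
include hx hy

theorem apply_invFun_comp (t : ℝ) : x₁ (invFun x₁ (y₁ t)) = y₁ t :=
  invFun_eq (by rw [← mem_range, hx.range_x₁, ← hy.range_x₁]; exact mem_range_self t)

theorem strictMono_invFun_comp : StrictMono (invFun x₁ ∘ y₁) := fun s t hst => by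
  rw [← hx.strictAnti_x₁.lt_iff_gt, comp_apply, comp_apply, hx.apply_invFun_comp hy,
    hx.apply_invFun_comp hy]
  exact hy.strictAnti_x₁ hst

theorem surjective_invFun_comp : Surjective (invFun x₁ ∘ y₁) := fun τ => by
  obtain ⟨t, ht⟩ : x₁ τ ∈ range y₁ := by
    rw [hy.range_x₁, ← hx.range_x₁]; exact mem_range_self τ
  exact ⟨t, by rw [comp_apply, ht, leftInverse_invFun hx.strictAnti_x₁.injective]⟩

theorem hasDerivAt_invFun_comp (t : ℝ) :
    HasDerivAt (invFun x₁ ∘ y₁) ((x₂ (invFun x₁ (y₁ t)))⁻¹ * y₂ t) t :=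
  (hasStrictDerivAt_of_hasDerivAt_of_continuousAt (.of_forall hx.hasDerivAt₁)
    (hx.hasDerivAt₂ _).continuousAt).hasDerivAt_of_comp_eq (hx.x₂_neg _).ne
    ((hx.strictMono_invFun_comp hy).monotone.continuous_of_surjective
      (hx.surjective_invFun_comp hy)).continuousAt
    (hy.hasDerivAt₁ t) (.of_forall (hx.apply_invFun_comp hy))

theorem hasDerivAt_sq_sub_sq (t : ℝ) :
    HasDerivAt (fun t => x₂ (invFun x₁ (y₁ t)) ^ 2 - y₂ t ^ 2)
      (2 * y₂ t * (x₃ (invFun x₁ (y₁ t)) - y₃ t)) t := by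
  have hθ := hx.hasDerivAt_invFun_comp hy t
  have hne := (hx.x₂_neg (invFun x₁ (y₁ t))).ne
  refine ((((hx.hasDerivAt₂ _).comp t hθ).pow 2).sub ((hy.hasDerivAt₂ t).pow 2)).congr_deriv ?_
  simp only [comp_apply, hx.apply_invFun_comp hy]
  field_simp
  ring

theorem hasDerivAt_mul_sub (t : ℝ) :
    HasDerivAt (fun t => 2 * y₂ t * (x₃ (invFun x₁ (y₁ t)) - y₃ t))
      (2 * (4 * y₁ t + y₃ t) * (x₃ (invFun x₁ (y₁ t)) - y₃ t) +
        2 * y₂ t * (x₄ (invFun x₁ (y₁ t)) * ((x₂ (invFun x₁ (y₁ t)))⁻¹ * y₂ t) - y₄ t)) t :=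
  ((hy.hasDerivAt₂ t).const_mul 2).mul
    (((hx.hasDerivAt₃ _).comp t (hx.hasDerivAt_invFun_comp hy t)).sub (hy.hasDerivAt₃ t))

theorem tendsto_sq_sub_sq_cocompact :
    Tendsto (fun t => x₂ (invFun x₁ (y₁ t)) ^ 2 - y₂ t ^ 2) (cocompact ℝ) (𝓝 0) := by
  have hmono := (hx.strictMono_invFun_comp hy).monotone
  have hsurj := hx.surjective_invFun_comp hy
  have hθ : Tendsto (invFun x₁ ∘ y₁) (cocompact ℝ) (cocompact ℝ) := by
    rw [cocompact_eq_atBot_atTop]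
    exact (tendsto_atBot_atBot_of_monotone hmono fun b => ⟨_, (hsurj b).choose_spec.le⟩).sup_sup
      (tendsto_atTop_atTop_of_monotone hmono fun b => ⟨_, (hsurj b).choose_spec.ge⟩)
  simpa using ((hx.tendsto_x₂_cocompact.comp hθ).pow 2).sub (hy.tendsto_x₂_cocompact.pow 2)

theorem sq_x₂_invFun_comp_le (t : ℝ) : x₂ (invFun x₁ (y₁ t)) ^ 2 ≤ y₂ t ^ 2 := by
  set W := fun t => x₂ (invFun x₁ (y₁ t)) ^ 2 - y₂ t ^ 2
  have hW := hx.hasDerivAt_sq_sub_sq hy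
  have hW_cont : Continuous W := continuous_iff_continuousAt.2 fun t => (hW t).continuousAt
  by_contra! h
  obtain ⟨t₀, ht₀⟩ := hW_cont.exists_forall_ge' t
    ((hx.tendsto_sq_sub_sq_cocompact hy).eventually_le_const (sub_pos.2 h))
  have hmax : IsLocalMax W t₀ := .of_forall ht₀
  have hcrit := hmax.hasDerivAt_eq_zero (hW t₀)
  have hx₃ : x₃ (invFun x₁ (y₁ t₀)) = y₃ t₀ := sub_eq_zero.1 <|
    (mul_eq_zero.1 hcrit).resolve_left (mul_ne_zero two_ne_zero (hy.x₂_neg t₀).ne)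
  have hsq : y₂ t₀ ^ 2 < x₂ (invFun x₁ (y₁ t₀)) ^ 2 := sub_pos.1 ((sub_pos.2 h).trans_le (ht₀ t))
  have hx₄ : x₄ (invFun x₁ (y₁ t₀)) < y₄ t₀ := by
    have hex := hx.energy (invFun x₁ (y₁ t₀))
    rw [hx.apply_invFun_comp hy, hx₃] at hex
    linarith [hy.energy t₀]
  have hslope : (x₂ (invFun x₁ (y₁ t₀)))⁻¹ * y₂ t₀ < 1 := by
    rw [← div_eq_inv_mul, div_lt_one_of_neg (hx.x₂_neg _)]
    nlinarith [hx.x₂_neg (invFun x₁ (y₁ t₀)), hy.x₂_neg t₀]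
  have hderiv : deriv W = fun t => 2 * y₂ t * (x₃ (invFun x₁ (y₁ t)) - y₃ t) :=
    funext fun t => (hW t).deriv
  refine not_isLocalMax_of_deriv_deriv_pos ?_ (by rw [hderiv]; exact hcrit) hW_cont.continuousAt
    hmax
  rw [hderiv, (hx.hasDerivAt_mul_sub hy t₀).deriv, hx₃, sub_self, mul_zero, zero_add]
  refine mul_pos_of_neg_of_neg (by linarith [hy.x₂_neg t₀]) ?_
  nlinarith [hx.pos (invFun x₁ (y₁ t₀))]

theorem x₂_invFun_comp (t : ℝ) : x₂ (invFun x₁ (y₁ t)) = y₂ t := by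
  have hle := hy.sq_x₂_invFun_comp_le hx (invFun x₁ (y₁ t))
  rw [hx.apply_invFun_comp hy, leftInverse_invFun hy.strictAnti_x₁.injective] at hle
  have hsq := le_antisymm (hx.sq_x₂_invFun_comp_le hy t) hle
  nlinarith [hx.x₂_neg (invFun x₁ (y₁ t)), hy.x₂_neg t]

theorem invFun_comp_eq_add (t : ℝ) : invFun x₁ (y₁ t) = t + invFun x₁ (y₁ 0) := by
  have hderiv : ∀ s, HasDerivAt (fun s => invFun x₁ (y₁ s) - s) 0 s := fun s => by
    have hθ := hx.hasDerivAt_invFun_comp hy s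
    rw [hx.x₂_invFun_comp hy, inv_mul_cancel₀ (hy.x₂_neg s).ne] at hθ
    exact (hθ.sub (hasDerivAt_id' s)).congr_deriv (sub_self 1)
  have := is_const_of_deriv_eq_zero (fun s => (hderiv s).differentiableAt)
    (fun s => (hderiv s).deriv) t 0
  linarith

theorem x₃_invFun_comp (t : ℝ) : x₃ (invFun x₁ (y₁ t)) = y₃ t := by
  have hW := hx.hasDerivAt_sq_sub_sq hy t
  simp only [hx.x₂_invFun_comp hy, sub_self] at hW
  have := hW.unique (hasDerivAt_const t 0)
  exact sub_eq_zero.1 <| (mul_eq_zero.1 this).resolve_left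
    (mul_ne_zero two_ne_zero (hy.x₂_neg t).ne)

theorem x₄_invFun_comp (t : ℝ) : x₄ (invFun x₁ (y₁ t)) = y₄ t := by
  have hex := hx.energy (invFun x₁ (y₁ t))
  rw [hx.apply_invFun_comp hy, hx.x₂_invFun_comp hy, hx.x₃_invFun_comp hy] at hex
  linarith [hy.energy t]

end Pair

end BoundedSolution

theorem bounded_solution_unique_up_to_translation_general
    (x₁ x₂ x₃ x₄ y₁ y₂ y₃ y₄ : ℝ → ℝ) (c : ℝ)
    (hx₁ : ∀ t : ℝ, HasDerivAt x₁ (x₂ t) t)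
    (hx₂ : ∀ t : ℝ, HasDerivAt x₂ (4 * x₁ t + x₃ t) t)
    (hx₃ : ∀ t : ℝ, HasDerivAt x₃ (x₄ t) t)
    (hy₁ : ∀ t : ℝ, HasDerivAt y₁ (y₂ t) t)
    (hy₂ : ∀ t : ℝ, HasDerivAt y₂ (4 * y₁ t + y₃ t) t)
    (hy₃ : ∀ t : ℝ, HasDerivAt y₃ (y₄ t) t)
    (hxbdd : ∃ M : ℝ, ∀ t : ℝ, |x₁ t| ≤ M ∧ |x₂ t| ≤ M ∧ |x₃ t| ≤ M ∧ |x₄ t| ≤ M)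
    (hybdd : ∃ M : ℝ, ∀ t : ℝ, |y₁ t| ≤ M ∧ |y₂ t| ≤ M ∧ |y₃ t| ≤ M ∧ |y₄ t| ≤ M)
    (hx₄pos : ∀ t : ℝ, 0 < x₄ t) (hy₄pos : ∀ t : ℝ, 0 < y₄ t)
    (hcx : ∀ t : ℝ, 2 * (x₂ t) ^ 2 - 8 * (x₁ t) ^ 2 - 4 * x₁ t * x₃ t + x₄ t = c)
    (hcy : ∀ t : ℝ, 2 * (y₂ t) ^ 2 - 8 * (y₁ t) ^ 2 - 4 * y₁ t * y₃ t + y₄ t = c) :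
    ∃ t₀ : ℝ, ∀ t : ℝ,
      y₁ t = x₁ (t + t₀) ∧ y₂ t = x₂ (t + t₀) ∧ y₃ t = x₃ (t + t₀) ∧ y₄ t = x₄ (t + t₀) := by
  have hx : BoundedSolution x₁ x₂ x₃ x₄ c :=
    ⟨hx₁, hx₂, hx₃, hxbdd.imp fun _ h t => ⟨(h t).1, (h t).2.1, (h t).2.2.1⟩, hx₄pos, hcx⟩
  have hy : BoundedSolution y₁ y₂ y₃ y₄ c :=
    ⟨hy₁, hy₂, hy₃, hybdd.imp fun _ h t => ⟨(h t).1, (h t).2.1, (h t).2.2.1⟩, hy₄pos, hcy⟩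
  refine ⟨invFun x₁ (y₁ 0), fun t => ?_⟩
  rw [← hx.invFun_comp_eq_add hy]
  exact ⟨(hx.apply_invFun_comp hy t).symm, (hx.x₂_invFun_comp hy t).symm,
    (hx.x₃_invFun_comp hy t).symm, (hx.x₄_invFun_comp hy t).symm⟩

/-- Uniqueness up to translation: two bounded solutions on `ℝ` of the system
`x₁' = x₂`, `x₂' = 4x₁ + x₃`, `x₃' = x₄`, `x₄' = 4x₁x₄` with `x₄ > 0`, `y₄ > 0` and the
same value `c` of the first integral `2x₂² − 8x₁² − 4x₁x₃ + x₄` agree up to a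
translation in `t`. -/
theorem bounded_solution_unique_up_to_translation
    (x₁ x₂ x₃ x₄ y₁ y₂ y₃ y₄ : ℝ → ℝ) (c : ℝ)
    (hx₁ : ∀ t : ℝ, HasDerivAt x₁ (x₂ t) t)
    (hx₂ : ∀ t : ℝ, HasDerivAt x₂ (4 * x₁ t + x₃ t) t)
    (hx₃ : ∀ t : ℝ, HasDerivAt x₃ (x₄ t) t)
    (hx₄ : ∀ t : ℝ, HasDerivAt x₄ (4 * x₁ t * x₄ t) t)
    (hy₁ : ∀ t : ℝ, HasDerivAt y₁ (y₂ t) t)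
    (hy₂ : ∀ t : ℝ, HasDerivAt y₂ (4 * y₁ t + y₃ t) t)
    (hy₃ : ∀ t : ℝ, HasDerivAt y₃ (y₄ t) t)
    (hy₄ : ∀ t : ℝ, HasDerivAt y₄ (4 * y₁ t * y₄ t) t)
    (hxbdd : ∃ M : ℝ, ∀ t : ℝ, |x₁ t| ≤ M ∧ |x₂ t| ≤ M ∧ |x₃ t| ≤ M ∧ |x₄ t| ≤ M)
    (hybdd : ∃ M : ℝ, ∀ t : ℝ, |y₁ t| ≤ M ∧ |y₂ t| ≤ M ∧ |y₃ t| ≤ M ∧ |y₄ t| ≤ M)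
    (hx₄pos : ∀ t : ℝ, 0 < x₄ t) (hy₄pos : ∀ t : ℝ, 0 < y₄ t)
    (hcx : ∀ t : ℝ, 2 * (x₂ t) ^ 2 - 8 * (x₁ t) ^ 2 - 4 * x₁ t * x₃ t + x₄ t = c)
    (hcy : ∀ t : ℝ, 2 * (y₂ t) ^ 2 - 8 * (y₁ t) ^ 2 - 4 * y₁ t * y₃ t + y₄ t = c) :
    ∃ t₀ : ℝ, ∀ t : ℝ,
      y₁ t = x₁ (t + t₀) ∧ y₂ t = x₂ (t + t₀) ∧ y₃ t = x₃ (t + t₀) ∧ y₄ t = x₄ (t + t₀) :=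
  bounded_solution_unique_up_to_translation_general x₁ x₂ x₃ x₄ y₁ y₂ y₃ y₄ c hx₁ hx₂ hx₃ hy₁ hy₂
    hy₃ hxbdd hybdd hx₄pos hy₄pos hcx hcy
end

section
/- Let −1 < β < 0 with β ≠ −1/2. For every polynomial f in four real variables there exists a polynomial q in four real variables such that the function x ↦ q(x)|x|^{4β+4} on ℝ⁴ \ {0} satisfies Δ²(q(x)|x|^{4β+4}) = f(x)|x|^{4β} for all x ≠ 0. -/
/-!
With `r = ‖x‖` and `E = ∑ xᵢ ∂ᵢ` the Euler operator, a direct computation gives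
`Δ(p rᵃ) = L_a(p) r^(a-2)` for `L_a = r²Δ + 2aE + a(a + n - 2)`, hence
`Δ²(q r^(4β+4)) = L_(4β+2) (L_(4β+4) q) r^(4β)`, and it suffices that both operators `L_a` are
onto. On forms of degree `d`, `L_a` acts as `r²Δ + c` with `c = a(a + 2d + n - 2)`. If
`r²Δp + cp = 0` and `c ≠ 0`, then `r²` divides `p`, and `p / r²` solves an equation of the same
kind in degree `d - 2` with `c` raised by `2(2d + n - 4)`; after `j` steps the constant is
`(a + 2j)(a + 2(d - j) + n - 2)`. So `L_a` is injective, hence bijective, on each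
(finite-dimensional) space of forms as soon as neither `a` nor `a + n - 2` lies in `-2ℕ`. For
`n = 4` the two exponents are `4β + 4 > 0` and `4β + 2 ∈ (-2, 0) ∪ (0, ∞)`.
-/

open MeasureTheory Real Filter

/-- The Euclidean Laplacian on `ℝⁿ`: the sum of second partial derivatives. -/
noncomputable def laplacianE {n : ℕ} (f : EuclideanSpace ℝ (Fin n) → ℝ)
    (x : EuclideanSpace ℝ (Fin n)) : ℝ :=
  ∑ i : Fin n, fderiv ℝ (fun y => fderiv ℝ f y (EuclideanSpace.single i 1)) x
    (EuclideanSpace.single i 1)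

open Topology

theorem Filter.EventuallyEq.laplacianE_eq {n : ℕ} {f g : EuclideanSpace ℝ (Fin n) → ℝ}
    {x : EuclideanSpace ℝ (Fin n)} (h : f =ᶠ[𝓝 x] g) : laplacianE f x = laplacianE g x := by
  refine Finset.sum_congr rfl fun i _ => ?_
  rw [Filter.EventuallyEq.fderiv_eq ((h.fderiv (𝕜 := ℝ)).mono fun y hy => by rw [hy])]

namespace MvPolynomial

section Identities

variable {R σ : Type*} [CommRing R]

theorem pderiv_ofNat (i : σ) (n : ℕ) [n.AtLeastTwo] :
    pderiv (R := R) i (ofNat(n) : MvPolynomial σ R) = 0 := by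
  rw [← Nat.cast_ofNat, Derivation.map_natCast]

theorem IsHomogeneous.pderiv_eq_zero {p : MvPolynomial σ R} (hp : p.IsHomogeneous 0) (i : σ) :
    pderiv i p = 0 := by
  rw [← totalDegree_zero_iff_isHomogeneous, totalDegree_eq_zero_iff_eq_C] at hp
  rw [hp, pderiv_C]

variable [Fintype σ]

noncomputable def sumSqX : MvPolynomial σ R := ∑ i, X i ^ 2

noncomputable def laplacian : MvPolynomial σ R →ₗ[R] MvPolynomial σ R :=
  ∑ i, (pderiv i).toLinearMap ∘ₗ (pderiv i).toLinearMap

noncomputable def euler : MvPolynomial σ R →ₗ[R] MvPolynomial σ R :=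
  ∑ i, LinearMap.mulLeft R (X i) ∘ₗ (pderiv i).toLinearMap

-- `twistedPDeriv a i p` and `twistedLaplacian a p` are the polynomial factors of `∂ᵢ(p ‖x‖ᵃ)`
-- and `Δ(p ‖x‖ᵃ)` in front of `‖x‖^(a-2)`.
noncomputable def twistedPDeriv (a : R) (i : σ) (p : MvPolynomial σ R) : MvPolynomial σ R :=
  sumSqX * pderiv i p + C a * (X i * p)

noncomputable def twistedLaplacian (a : R) : MvPolynomial σ R →ₗ[R] MvPolynomial σ R :=
  LinearMap.mulLeft R sumSqX ∘ₗ laplacian + (2 * a) • euler +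
    (a * (a + Fintype.card σ - 2)) • LinearMap.id

theorem laplacian_apply (p : MvPolynomial σ R) :
    laplacian p = ∑ i, pderiv i (pderiv i p) := by
  simp [laplacian]

theorem euler_apply (p : MvPolynomial σ R) : euler p = ∑ i, X i * pderiv i p := by
  simp [euler]

theorem twistedLaplacian_apply (a : R) (p : MvPolynomial σ R) :
    twistedLaplacian a p = sumSqX * laplacian p + C (2 * a) * euler p +
      C (a * (a + Fintype.card σ - 2)) * p := by
  simp [twistedLaplacian, smul_eq_C_mul]

theorem pderiv_sumSqX (i : σ) : pderiv i (sumSqX : MvPolynomial σ R) = 2 * X i := by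
  classical
  simp [sumSqX, pderiv_X, Pi.single_apply, mul_comm]

theorem laplacian_sumSqX_mul (v : MvPolynomial σ R) :
    laplacian (sumSqX * v) =
      sumSqX * laplacian v + 4 * euler v + C (2 * (Fintype.card σ : R)) * v := by
  have h : ∀ i, pderiv i (pderiv i (sumSqX * v)) =
      sumSqX * pderiv i (pderiv i v) + 4 * (X i * pderiv i v) + 2 * v := by
    intro i
    simp only [pderiv_mul, map_add, pderiv_sumSqX, pderiv_X_self, pderiv_ofNat]
    ring
  simp only [laplacian_apply, euler_apply, h, Finset.sum_add_distrib, ← Finset.mul_sum,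
    Finset.sum_const, Finset.card_univ, nsmul_eq_mul, map_mul, map_natCast, map_ofNat]
  ring

theorem sum_twistedPDeriv (a : R) (p : MvPolynomial σ R) :
    ∑ i, twistedPDeriv (a - 2) i (twistedPDeriv a i p) = sumSqX * twistedLaplacian a p := by
  have h : ∀ i, twistedPDeriv (a - 2) i (twistedPDeriv a i p) =
      sumSqX * (sumSqX * pderiv i (pderiv i p)) + sumSqX * (C (2 * a) * (X i * pderiv i p)) +
        C a * sumSqX * p + C (a * (a - 2)) * (X i ^ 2 * p) := by
    intro i
    simp only [twistedPDeriv, map_add, pderiv_mul, pderiv_sumSqX, pderiv_X_self, pderiv_C,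
      map_mul, map_sub, map_ofNat]
    ring
  simp only [h, Finset.sum_add_distrib, ← Finset.mul_sum, ← Finset.sum_mul,
    twistedLaplacian_apply, laplacian_apply, euler_apply, Finset.sum_const, Finset.card_univ,
    nsmul_eq_mul]
  simp only [sumSqX, map_mul, map_sub, map_add, map_natCast, map_ofNat]
  ring

theorem isHomogeneous_sumSqX : (sumSqX : MvPolynomial σ R).IsHomogeneous 2 :=
  IsHomogeneous.sum _ _ _ fun i _ => isHomogeneous_X_pow i 2

variable {p : MvPolynomial σ R} {d : ℕ}

theorem isHomogeneous_laplacian (hp : p.IsHomogeneous d) :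
    (laplacian p).IsHomogeneous (d - 2) := by
  rw [laplacian_apply, show d - 2 = d - 1 - 1 by omega]
  exact IsHomogeneous.sum _ _ _ fun i _ => hp.pderiv.pderiv

theorem IsHomogeneous.laplacian_eq_zero (hp : p.IsHomogeneous d) (hd : d < 2) :
    laplacian p = 0 := by
  rw [laplacian_apply]
  refine Finset.sum_eq_zero fun i _ => IsHomogeneous.pderiv_eq_zero ?_ i
  simpa [show d - 1 = 0 by omega] using hp.pderiv (i := i)

theorem isHomogeneous_sumSqX_mul_laplacian (hp : p.IsHomogeneous d) :
    (sumSqX * laplacian p).IsHomogeneous d := by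
  rcases lt_or_ge d 2 with hd | hd
  · rw [hp.laplacian_eq_zero hd, mul_zero]
    exact isHomogeneous_zero _ _ _
  · simpa [Nat.add_sub_cancel' hd] using isHomogeneous_sumSqX.mul (isHomogeneous_laplacian hp)

theorem IsHomogeneous.twistedLaplacian_eq (hp : p.IsHomogeneous d) (a : R) :
    twistedLaplacian a p =
      sumSqX * laplacian p + C (a * (a + 2 * d + Fintype.card σ - 2)) * p := by
  rw [twistedLaplacian_apply, euler_apply, hp.sum_X_mul_pderiv, nsmul_eq_mul,
    ← map_natCast C]
  simp only [map_mul, map_add, map_sub, map_ofNat]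
  ring

theorem isHomogeneous_twistedLaplacian (hp : p.IsHomogeneous d) (a : R) :
    (twistedLaplacian a p).IsHomogeneous d := by
  rw [hp.twistedLaplacian_eq]
  refine (isHomogeneous_sumSqX_mul_laplacian hp).add ?_
  simpa only [zero_add] using (isHomogeneous_C σ _).mul hp

end Identities

section Spectrum

variable {K σ : Type*} [Field K] [CharZero K] [Fintype σ]

theorem sumSqX_ne_zero [Nonempty σ] : (sumSqX : MvPolynomial σ K) ≠ 0 := by
  intro h
  simpa [sumSqX] using congrArg (eval fun _ => (1 : K)) h

theorem IsHomogeneous.eq_zero_of_sumSqX_mul_laplacian_add_C_mul_eq_zero [Nonempty σ]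
    {d : ℕ} {c : K}
    (hc : ∀ j : ℕ, 2 * j ≤ d → c + 2 * j * (2 * d - 2 * j + Fintype.card σ - 2) ≠ 0)
    {p : MvPolynomial σ K} (hp : p.IsHomogeneous d) (h : sumSqX * laplacian p + C c * p = 0) :
    p = 0 := by
  induction d using Nat.strong_induction_on generalizing c p with
  | _ d ih =>
  have hc₀ : c ≠ 0 := by simpa using hc 0 (Nat.zero_le d)
  rcases lt_or_ge d 2 with hd | hd
  · rw [hp.laplacian_eq_zero hd, mul_zero, zero_add] at h
    simpa [hc₀] using h
  obtain ⟨m, rfl⟩ := Nat.exists_eq_add_of_le' hd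
  set v := C (-c⁻¹) * laplacian p with hv_def
  have hpv : p = sumSqX * v := by
    have hp' : p = C c⁻¹ * (C c * p) := by
      rw [← mul_assoc, ← map_mul, inv_mul_cancel₀ hc₀, map_one, one_mul]
    rw [hp', eq_neg_of_add_eq_zero_right h, hv_def, map_neg]
    ring
  have hv : v.IsHomogeneous m := by
    simpa using (isHomogeneous_C σ _).mul (isHomogeneous_laplacian hp)
  have hv₀ : sumSqX * laplacian v + C (c + 4 * m + 2 * Fintype.card σ) * v = 0 := by
    refine (mul_eq_zero.mp ?_).resolve_left sumSqX_ne_zero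
    rw [hpv, laplacian_sumSqX_mul, euler_apply, hv.sum_X_mul_pderiv, nsmul_eq_mul] at h
    rw [← h]
    simp only [map_add, map_mul, map_natCast, map_ofNat]
    ring
  rw [hpv, ih m (by omega) (fun j hj => ?_) hv hv₀, mul_zero]
  have := hc (j + 1) (by omega)
  push_cast at this ⊢
  convert this using 1
  ring

variable [Nonempty σ] {a : K}

theorem IsHomogeneous.eq_zero_of_twistedLaplacian_eq_zero (ha : ∀ k : ℕ, a + 2 * k ≠ 0)
    (ha' : ∀ k : ℕ, a + 2 * k + Fintype.card σ ≠ 2) {d : ℕ}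
    {p : MvPolynomial σ K} (hp : p.IsHomogeneous d) (h : twistedLaplacian a p = 0) : p = 0 := by
  refine hp.eq_zero_of_sumSqX_mul_laplacian_add_C_mul_eq_zero (fun j hj => ?_)
    (hp.twistedLaplacian_eq a ▸ h)
  have hfactor :
      a * (a + 2 * d + Fintype.card σ - 2) + 2 * j * (2 * d - 2 * j + Fintype.card σ - 2) =
        (a + 2 * j) * (a + 2 * (d - j : ℕ) + Fintype.card σ - 2) := by
    push_cast [Nat.cast_sub (show j ≤ d by omega)]
    ring
  rw [hfactor]
  exact mul_ne_zero (ha j) (sub_ne_zero.mpr (ha' (d - j)))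

theorem homogeneousSubmodule_le_range_twistedLaplacian (ha : ∀ k : ℕ, a + 2 * k ≠ 0)
    (ha' : ∀ k : ℕ, a + 2 * k + Fintype.card σ ≠ 2) (d : ℕ) :
    homogeneousSubmodule σ K d ≤ LinearMap.range (twistedLaplacian a) := by
  have : Module.Finite K (homogeneousSubmodule σ K d) :=
    Module.Finite.iff_fg.mpr (homogeneousSubmodule_fg σ K d)
  let T := (twistedLaplacian a).restrict (p := homogeneousSubmodule σ K d)
    fun _ hp => (mem_homogeneousSubmodule _ _).mpr
      (isHomogeneous_twistedLaplacian ((mem_homogeneousSubmodule _ _).mp hp) a)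
  have hT : Function.Injective T := by
    rw [← LinearMap.ker_eq_bot, LinearMap.ker_eq_bot']
    intro p hp
    exact Subtype.ext (p.2.eq_zero_of_twistedLaplacian_eq_zero ha ha' (congrArg Subtype.val hp))
  intro g hg
  obtain ⟨q, hq⟩ := LinearMap.injective_iff_surjective.mp hT ⟨g, hg⟩
  exact ⟨q, congrArg Subtype.val hq⟩

theorem twistedLaplacian_surjective (ha : ∀ k : ℕ, a + 2 * k ≠ 0)
    (ha' : ∀ k : ℕ, a + 2 * k + Fintype.card σ ≠ 2) :
    Function.Surjective (twistedLaplacian a : MvPolynomial σ K →ₗ[K] MvPolynomial σ K) := by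
  intro f
  rw [← LinearMap.mem_range, ← sum_homogeneousComponent f]
  exact Submodule.sum_mem _ fun d _ =>
    homogeneousSubmodule_le_range_twistedLaplacian ha ha' d (homogeneousComponent_mem d f)

end Spectrum

section Euclidean

variable {n : ℕ}

theorem hasFDerivAt_eval (p : MvPolynomial (Fin n) ℝ) (x : EuclideanSpace ℝ (Fin n)) :
    HasFDerivAt (fun y : EuclideanSpace ℝ (Fin n) => eval (fun i => y i) p)
      (∑ j, eval (fun i => x i) (pderiv j p) •
        (EuclideanSpace.proj j : EuclideanSpace ℝ (Fin n) →L[ℝ] ℝ)) x := by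
  induction p using MvPolynomial.induction_on with
  | C a => simpa using hasFDerivAt_const a x
  | add p q hp hq =>
    simp only [map_add, add_smul, Finset.sum_add_distrib]
    exact hp.add hq
  | mul_X p i hp =>
    simp only [map_mul, eval_X]
    refine (hp.mul (EuclideanSpace.proj i).hasFDerivAt).congr_fderiv ?_
    ext v
    simp [pderiv_X, Pi.single_apply, apply_ite (eval _), ite_mul, add_mul, Finset.sum_add_distrib,
      Finset.mul_sum, mul_assoc]

theorem eval_sumSqX (x : EuclideanSpace ℝ (Fin n)) :
    eval (fun i => x i) sumSqX = ‖x‖ ^ 2 := by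
  simp [sumSqX, EuclideanSpace.real_norm_sq_eq]

theorem norm_rpow_eq_eval_sumSqX_rpow (x : EuclideanSpace ℝ (Fin n)) (a : ℝ) :
    ‖x‖ ^ a = eval (fun i => x i) sumSqX ^ (a / 2) := by
  rw [eval_sumSqX, ← rpow_natCast, ← rpow_mul (norm_nonneg x)]
  ring_nf

theorem fderiv_eval_mul_norm_rpow_single (p : MvPolynomial (Fin n) ℝ) (a : ℝ)
    {x : EuclideanSpace ℝ (Fin n)} (hx : x ≠ 0) (i : Fin n) :
    fderiv ℝ (fun y : EuclideanSpace ℝ (Fin n) => eval (fun k => y k) p * ‖y‖ ^ a) x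
        (EuclideanSpace.single i 1) =
      eval (fun k => x k) (twistedPDeriv a i p) * ‖x‖ ^ (a - 2) := by
  have hS : 0 < eval (fun k => x k) sumSqX := by
    rw [eval_sumSqX]
    exact pow_pos (norm_pos_iff.mpr hx) 2
  have hderiv := (hasFDerivAt_eval p x).mul
    ((hasFDerivAt_eval sumSqX x).rpow_const (p := a / 2) (Or.inl hS.ne'))
  have hfun : (fun y : EuclideanSpace ℝ (Fin n) => eval (fun k => y k) p * ‖y‖ ^ a) =
      (fun y => eval (fun k => y k) p) * fun y => eval (fun k => y k) sumSqX ^ (a / 2) := by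
    ext y
    simp [norm_rpow_eq_eval_sumSqX_rpow y a]
  have hpow : eval (fun k => x k) sumSqX ^ (a / 2 - 1) = ‖x‖ ^ (a - 2) := by
    rw [norm_rpow_eq_eval_sumSqX_rpow]
    ring_nf
  have hpow' : eval (fun k => x k) sumSqX ^ (a / 2) = ‖x‖ ^ 2 * ‖x‖ ^ (a - 2) := by
    rw [← hpow, ← eval_sumSqX, rpow_sub_one hS.ne']
    field_simp
  rw [hfun, hderiv.fderiv]
  simp only [add_apply, smul_apply, sum_apply, PiLp.proj_apply, PiLp.single_apply, smul_eq_mul,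
    mul_ite, mul_one, mul_zero, Finset.sum_ite_eq', Finset.mem_univ, if_true, twistedPDeriv,
    pderiv_sumSqX, map_add, map_mul, eval_ofNat, eval_X, eval_C, hpow, hpow']
  rw [eval_sumSqX]
  ring

theorem laplacianE_eval_mul_norm_rpow (p : MvPolynomial (Fin n) ℝ) (a : ℝ)
    {x : EuclideanSpace ℝ (Fin n)} (hx : x ≠ 0) :
    laplacianE (fun y => eval (fun i => y i) p * ‖y‖ ^ a) x =
      eval (fun i => x i) (twistedLaplacian a p) * ‖x‖ ^ (a - 2) := by
  have hpartial : ∀ i, fderiv ℝ (fun y => fderiv ℝ (fun z : EuclideanSpace ℝ (Fin n) =>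
      eval (fun k => z k) p * ‖z‖ ^ a) y (EuclideanSpace.single i 1)) x
        (EuclideanSpace.single i 1) =
      eval (fun k => x k) (twistedPDeriv (a - 2) i (twistedPDeriv a i p)) *
        ‖x‖ ^ (a - 2 - 2) := by
    intro i
    have hnear : (fun y => fderiv ℝ (fun z : EuclideanSpace ℝ (Fin n) =>
        eval (fun k => z k) p * ‖z‖ ^ a) y (EuclideanSpace.single i 1)) =ᶠ[𝓝 x]
          fun y => eval (fun k => y k) (twistedPDeriv a i p) * ‖y‖ ^ (a - 2) :=
      (isOpen_compl_singleton.eventually_mem hx).mono fun y hy =>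
        fderiv_eval_mul_norm_rpow_single p a hy i
    rw [hnear.fderiv_eq, fderiv_eval_mul_norm_rpow_single _ _ hx]
  have hpow : ‖x‖ ^ (a - 2) = ‖x‖ ^ 2 * ‖x‖ ^ (a - 2 - 2) := by
    rw [← rpow_natCast, ← rpow_add (norm_pos_iff.mpr hx)]
    ring_nf
  rw [laplacianE, Finset.sum_congr rfl fun i _ => hpartial i, ← Finset.sum_mul, ← map_sum,
    sum_twistedPDeriv, map_mul, eval_sumSqX, hpow]
  ring

end Euclidean

end MvPolynomial

open MvPolynomial

theorem exists_polynomial_bilaplacian_general (β : ℝ) (hβ₁ : -1 < β)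
    (hβ : β ≠ -1/2) (f : MvPolynomial (Fin 4) ℝ) :
    ∃ q : MvPolynomial (Fin 4) ℝ,
      ∀ x : EuclideanSpace ℝ (Fin 4), x ≠ 0 →
        laplacianE (laplacianE
            (fun y => MvPolynomial.eval (fun i => y i) q * ‖y‖ ^ (4 * β + 4))) x =
          MvPolynomial.eval (fun i => x i) f * ‖x‖ ^ (4 * β) := by
  have hcard : (Fintype.card (Fin 4) : ℝ) = 4 := by simp
  obtain ⟨q₁, rfl⟩ := twistedLaplacian_surjective (a := 4 * β + 2)
    (fun k => by
      rcases k.eq_zero_or_pos with rfl | hk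
      · simpa using fun h => hβ (by linarith)
      · exact ne_of_gt (by linarith [(Nat.one_le_cast.mpr hk : (1 : ℝ) ≤ k)]))
    (fun k => ne_of_gt (by rw [hcard]; linarith [k.cast_nonneg (α := ℝ)])) f
  obtain ⟨q, rfl⟩ := twistedLaplacian_surjective (a := 4 * β + 4)
    (fun k => ne_of_gt (by linarith [k.cast_nonneg (α := ℝ)]))
    (fun k => ne_of_gt (by rw [hcard]; linarith [k.cast_nonneg (α := ℝ)])) q₁
  refine ⟨q, fun x hx => ?_⟩
  have hnear : laplacianE (fun y => eval (fun i => y i) q * ‖y‖ ^ (4 * β + 4)) =ᶠ[𝓝 x]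
      fun y => eval (fun i => y i) (twistedLaplacian (4 * β + 4) q) * ‖y‖ ^ (4 * β + 2) :=
    (isOpen_compl_singleton.eventually_mem hx).mono fun y hy => by
      rw [laplacianE_eval_mul_norm_rpow q _ hy, show 4 * β + 4 - 2 = 4 * β + 2 by ring]
  rw [hnear.laplacianE_eq, laplacianE_eval_mul_norm_rpow _ _ hx,
    show 4 * β + 2 - 2 = 4 * β by ring]

/-- For `-1 < β < 0`, `β ≠ -1/2`, and any polynomial `f` on `ℝ⁴`, there is a polynomial
`q` with `Δ²(q(x)|x|^{4β+4}) = f(x)|x|^{4β}` away from the origin. -/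
theorem exists_polynomial_bilaplacian (β : ℝ) (hβ₁ : -1 < β) (hβ₀ : β < 0)
    (hβ : β ≠ -1/2) (f : MvPolynomial (Fin 4) ℝ) :
    ∃ q : MvPolynomial (Fin 4) ℝ,
      ∀ x : EuclideanSpace ℝ (Fin 4), x ≠ 0 →
        laplacianE (laplacianE
            (fun y => MvPolynomial.eval (fun i => y i) q * ‖y‖ ^ (4 * β + 4))) x =
          MvPolynomial.eval (fun i => x i) f * ‖x‖ ^ (4 * β) :=
  exists_polynomial_bilaplacian_general β hβ₁ hβ f
end

section
/- Let β = −1/2 and let f(x) = Σ_{i,j} a_{ij}x_i x_j + Σ_i b_i x_i + c be a polynomial of degree at most 2 on ℝ⁴. Then there exist real constants a₀, ã_{ij}, b̃_i, c̃ such that the function q(x) = a₀|x|² + (Σ_{i,j} ã_{ij}x_i x_j + Σ_i b̃_i x_i + c̃) log|x| satisfies Δ²(q(x)|x|²) = f(x)|x|^{−2} for all x ∈ ℝ⁴ \ {0}. -/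
open MeasureTheory Real Filter

/-!
Away from the origin we compute `Δ = div ∘ ∇`. Let `p` be harmonic and homogeneous of degree `d`
(so `⟪∇p y, y⟫ = d p y`) on a space of dimension `N`, and let `φ` be a function of `t = ‖y‖²`.
The product rule gives
  `Δ (p · φ(‖y‖²)) = p · (4 t φ'' + (2N + 4d) φ')(‖y‖²)`,
so `Δ²` of such a product is a second-order ODE computation in `t`. With `c = N + 2d` it gives
`Δ² (p ‖y‖⁴) = 8c(c+2) p` and, for `φ = t log t / 2`, `Δ² (p ‖y‖² log ‖y‖) = 2c(c-2) p / ‖y‖²`.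
Splitting the quadratic `f` into a harmonic (traceless) quadratic part, a multiple of `‖y‖²`, a
linear part and a constant, each piece of `f / ‖y‖²` is the bilaplacian of one such term
(in `ℝ⁴` the factors are `96`, `192`, `48` and `16`).
-/

open Topology
open scoped RealInnerProductSpace

section Gradient

variable {F : Type*} [NormedAddCommGroup F] [InnerProductSpace ℝ F] [CompleteSpace F]
  {f g : F → ℝ} {f' g' x : F}

theorem HasGradientAt.add (hf : HasGradientAt f f' x) (hg : HasGradientAt g g' x) :
    HasGradientAt (fun y => f y + g y) (f' + g') x := by
  rw [hasGradientAt_iff_hasFDerivAt, map_add]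
  exact hf.hasFDerivAt.add hg.hasFDerivAt

theorem HasGradientAt.mul (hf : HasGradientAt f f' x) (hg : HasGradientAt g g' x) :
    HasGradientAt (fun y => f y * g y) (f x • g' + g x • f') x := by
  rw [hasGradientAt_iff_hasFDerivAt, map_add, map_smul, map_smul]
  exact hf.hasFDerivAt.mul hg.hasFDerivAt

theorem hasGradientAt_inner_left (v x : F) : HasGradientAt (fun y => ⟪v, y⟫) v x := by
  rw [hasGradientAt_iff_hasFDerivAt]
  exact (innerSL ℝ v).hasFDerivAt

theorem HasDerivAt.hasGradientAt_comp_norm_sq {φ : ℝ → ℝ} {φ' : ℝ}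
    (h : HasDerivAt φ φ' (‖x‖ ^ 2)) :
    HasGradientAt (fun y => φ (‖y‖ ^ 2)) ((2 * φ') • x) x := by
  rw [hasGradientAt_iff_hasFDerivAt]
  refine (h.comp_hasFDerivAt x (hasStrictFDerivAt_norm_sq x).hasFDerivAt).congr_fderiv ?_
  ext v
  simp only [smul_apply, InnerProductSpace.toDual_apply_apply, innerSL_apply_apply,
    real_inner_smul_left, smul_eq_mul, nsmul_eq_mul]
  ring

theorem ContinuousLinearMap.hasGradientAt_inner_self (T : F →L[ℝ] F) (x : F) :
    HasGradientAt (fun y => ⟪T y, y⟫) (T x + T.adjoint x) x := by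
  rw [hasGradientAt_iff_hasFDerivAt]
  refine (T.hasFDerivAt.inner ℝ (hasFDerivAt_id x)).congr_fderiv ?_
  ext v
  simp [ContinuousLinearMap.adjoint_inner_left, real_inner_comm]

end Gradient

section Divergence

variable {F : Type*} [NormedAddCommGroup F] [InnerProductSpace ℝ F]

def HasDivergenceAt (V : F → F) (d : ℝ) (x : F) : Prop :=
  ∃ V' : F →L[ℝ] F, HasFDerivAt V V' x ∧ LinearMap.trace ℝ F V' = d

variable {V W : F → F} {d e : ℝ} {x : F}

theorem HasDivergenceAt.add (hV : HasDivergenceAt V d x) (hW : HasDivergenceAt W e x) :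
    HasDivergenceAt (fun y => V y + W y) (d + e) x := by
  obtain ⟨V', hV', rfl⟩ := hV
  obtain ⟨W', hW', rfl⟩ := hW
  exact ⟨V' + W', hV'.add hW', by simp⟩

theorem hasDivergenceAt_const (v x : F) : HasDivergenceAt (fun _ => v) 0 x :=
  ⟨0, hasFDerivAt_const v x, by simp⟩

theorem ContinuousLinearMap.hasDivergenceAt (T : F →L[ℝ] F) (x : F) :
    HasDivergenceAt T (LinearMap.trace ℝ F T) x :=
  ⟨T, T.hasFDerivAt, rfl⟩

variable [FiniteDimensional ℝ F]

theorem HasDivergenceAt.smul {c : F → ℝ} {c' : F} (hV : HasDivergenceAt V d x)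
    (hc : HasGradientAt c c' x) :
    HasDivergenceAt (fun y => c y • V y) (c x * d + ⟪c', V x⟫) x := by
  obtain ⟨V', hV', rfl⟩ := hV
  refine ⟨_, hc.hasFDerivAt.smul hV', ?_⟩
  simp [LinearMap.trace_smulRight]

theorem hasDivergenceAt_id (x : F) : HasDivergenceAt (fun y => y) (Module.finrank ℝ F) x :=
  ⟨ContinuousLinearMap.id ℝ F, hasFDerivAt_id x, by simp⟩

theorem ContinuousLinearMap.trace_adjoint (T : F →L[ℝ] F) :
    LinearMap.trace ℝ F (T.adjoint : F →L[ℝ] F) = LinearMap.trace ℝ F T := by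
  simp only [LinearMap.trace_eq_sum_inner _ (stdOrthonormalBasis ℝ F), ContinuousLinearMap.coe_coe,
    ContinuousLinearMap.adjoint_inner_right, real_inner_comm]

end Divergence

section Laplacian

variable {F : Type*} [NormedAddCommGroup F] [InnerProductSpace ℝ F]

def HasLaplacianOn [CompleteSpace F] (f L : F → ℝ) (s : Set F) : Prop :=
  ∃ G : F → F, ∀ y ∈ s, HasGradientAt f (G y) y ∧ HasDivergenceAt G (L y) y

def HasBilaplacianOn [CompleteSpace F] (f K : F → ℝ) (s : Set F) : Prop :=
  ∃ L : F → ℝ, HasLaplacianOn f L s ∧ HasLaplacianOn L K s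

variable {f₁ f₂ L₁ L₂ : F → ℝ} {s : Set F}

theorem HasLaplacianOn.add [CompleteSpace F] (h₁ : HasLaplacianOn f₁ L₁ s)
    (h₂ : HasLaplacianOn f₂ L₂ s) :
    HasLaplacianOn (fun y => f₁ y + f₂ y) (fun y => L₁ y + L₂ y) s := by
  obtain ⟨G₁, hG₁⟩ := h₁
  obtain ⟨G₂, hG₂⟩ := h₂
  exact ⟨fun y => G₁ y + G₂ y, fun y hy =>
    ⟨(hG₁ y hy).1.add (hG₂ y hy).1, (hG₁ y hy).2.add (hG₂ y hy).2⟩⟩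

theorem HasBilaplacianOn.add [CompleteSpace F] (h₁ : HasBilaplacianOn f₁ L₁ s)
    (h₂ : HasBilaplacianOn f₂ L₂ s) :
    HasBilaplacianOn (fun y => f₁ y + f₂ y) (fun y => L₁ y + L₂ y) s := by
  obtain ⟨M₁, hf₁, hM₁⟩ := h₁
  obtain ⟨M₂, hf₂, hM₂⟩ := h₂
  exact ⟨fun y => M₁ y + M₂ y, hf₁.add hf₂, hM₁.add hM₂⟩

/-- Euler's identity `inner_self` stands in for homogeneity of degree `d`. -/
structure IsHarmonicHomogeneous [CompleteSpace F] (p : F → ℝ) (P : F → F) (d : ℝ) : Prop where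
  hasGradientAt : ∀ y, HasGradientAt p (P y) y
  hasDivergenceAt : ∀ y, HasDivergenceAt P 0 y
  inner_self : ∀ y, ⟪P y, y⟫ = d * p y

theorem isHarmonicHomogeneous_const [CompleteSpace F] (c : ℝ) :
    IsHarmonicHomogeneous (fun _ : F => c) (fun _ => 0) 0 :=
  ⟨fun _ => hasGradientAt_const _ c, hasDivergenceAt_const 0, fun _ => by simp⟩

theorem isHarmonicHomogeneous_inner_left [CompleteSpace F] (v : F) :
    IsHarmonicHomogeneous (fun y => ⟪v, y⟫) (fun _ => v) 1 :=
  ⟨hasGradientAt_inner_left v, hasDivergenceAt_const v, fun _ => (one_mul _).symm⟩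

variable [FiniteDimensional ℝ F]

theorem ContinuousLinearMap.isHarmonicHomogeneous_inner_self {T : F →L[ℝ] F}
    (hT : LinearMap.trace ℝ F T = 0) :
    IsHarmonicHomogeneous (fun y => ⟪T y, y⟫) (fun y => T y + T.adjoint y) 2 where
  hasGradientAt := T.hasGradientAt_inner_self
  hasDivergenceAt y := by
    have h := (T + T.adjoint).hasDivergenceAt y
    simp only [ContinuousLinearMap.toLinearMap_add, map_add, T.trace_adjoint, hT, add_zero] at h
    exact h
  inner_self y := by
    rw [inner_add_left, ContinuousLinearMap.adjoint_inner_left, real_inner_comm y]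
    ring

variable {p : F → ℝ} {P : F → F} {d : ℝ}

theorem IsHarmonicHomogeneous.hasLaplacianOn_mul_comp_norm_sq (hp : IsHarmonicHomogeneous p P d)
    {φ φ' φ'' ψ : ℝ → ℝ} (hφ : ∀ t > 0, HasDerivAt φ (φ' t) t)
    (hφ' : ∀ t > 0, HasDerivAt φ' (φ'' t) t)
    (hψ : ∀ t > 0, ψ t = 4 * t * φ'' t + (2 * Module.finrank ℝ F + 4 * d) * φ' t) :
    HasLaplacianOn (fun y => p y * φ (‖y‖ ^ 2)) (fun y => p y * ψ (‖y‖ ^ 2)) {0}ᶜ := by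
  refine ⟨fun y => p y • (2 * φ' (‖y‖ ^ 2)) • y + φ (‖y‖ ^ 2) • P y, fun y hy => ?_⟩
  have ht : 0 < ‖y‖ ^ 2 := pow_pos (norm_pos_iff.2 hy) 2
  have hφu := (hφ _ ht).hasGradientAt_comp_norm_sq
  have hφ'u := ((hφ' _ ht).const_mul 2).hasGradientAt_comp_norm_sq
  refine ⟨(hp.hasGradientAt y).mul hφu, ?_⟩
  have hdiv := (((hasDivergenceAt_id y).smul hφ'u).smul (hp.hasGradientAt y)).add
    ((hp.hasDivergenceAt y).smul hφu)
  convert hdiv using 1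
  simp only [hψ _ ht, real_inner_smul_left, real_inner_smul_right, real_inner_comm (P y) y,
    hp.inner_self, real_inner_self_eq_norm_sq]
  ring

theorem IsHarmonicHomogeneous.hasBilaplacianOn_mul_norm_pow_four
    (hp : IsHarmonicHomogeneous p P d) :
    HasBilaplacianOn (fun y => p y * ‖y‖ ^ 4)
      (fun y => p y * (8 * (Module.finrank ℝ F + 2 * d) * (Module.finrank ℝ F + 2 * d + 2)))
      {0}ᶜ := by
  set c : ℝ := Module.finrank ℝ F + 2 * d
  have hΔ := hp.hasLaplacianOn_mul_comp_norm_sq (φ := fun t => t ^ 2) (φ' := fun t => 2 * t)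
    (φ'' := fun _ => 2) (ψ := fun t => 4 * (c + 2) * t)
    (fun t _ => by simpa using hasDerivAt_pow 2 t)
    (fun t _ => by simpa using (hasDerivAt_id t).const_mul 2)
    (fun t _ => by ring)
  have hΔΔ := hp.hasLaplacianOn_mul_comp_norm_sq (φ := fun t => 4 * (c + 2) * t)
    (φ' := fun _ => 4 * (c + 2)) (φ'' := fun _ => 0) (ψ := fun _ => 8 * c * (c + 2))
    (fun t _ => by simpa using (hasDerivAt_id t).const_mul (4 * (c + 2)))
    (fun t _ => hasDerivAt_const t _)
    (fun t _ => by ring)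
  refine ⟨_, ?_, hΔΔ⟩
  simpa only [← pow_mul] using hΔ

theorem IsHarmonicHomogeneous.hasBilaplacianOn_mul_norm_sq_mul_log
    (hp : IsHarmonicHomogeneous p P d) :
    HasBilaplacianOn (fun y => p y * (‖y‖ ^ 2 * Real.log ‖y‖))
      (fun y => p y *
        (2 * (Module.finrank ℝ F + 2 * d) * (Module.finrank ℝ F + 2 * d - 2) / ‖y‖ ^ 2))
      {0}ᶜ := by
  set c : ℝ := Module.finrank ℝ F + 2 * d
  have hΔ := hp.hasLaplacianOn_mul_comp_norm_sq (φ := fun t => t * Real.log t / 2)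
    (φ' := fun t => (Real.log t + 1) / 2) (φ'' := fun t => t⁻¹ / 2)
    (ψ := fun t => c * Real.log t + c + 2)
    (fun t ht => by
      refine (((hasDerivAt_id' t).mul (Real.hasDerivAt_log ht.ne')).div_const 2).congr_deriv ?_
      rw [mul_inv_cancel₀ ht.ne']
      ring)
    (fun t ht => by simpa using ((Real.hasDerivAt_log ht.ne').add_const 1).div_const 2)
    (fun t ht => by field_simp; ring)
  have hΔΔ := hp.hasLaplacianOn_mul_comp_norm_sq (φ := fun t => c * Real.log t + c + 2)
    (φ' := fun t => c * t⁻¹) (φ'' := fun t => -(c * (t ^ 2)⁻¹))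
    (ψ := fun t => 2 * c * (c - 2) / t)
    (fun t ht => by simpa using ((Real.hasDerivAt_log ht.ne').const_mul c).add_const (c + 2))
    (fun t ht => by simpa using (hasDerivAt_inv ht.ne').const_mul c)
    (fun t ht => by field_simp; ring)
  refine ⟨_, ?_, hΔΔ⟩
  convert hΔ using 4 with y
  rw [Real.log_pow]
  ring

end Laplacian

section EuclideanSpace

variable {ι : Type*} [Fintype ι] [DecidableEq ι]

theorem Matrix.inner_toEuclideanCLM_self (A : Matrix ι ι ℝ) (y : EuclideanSpace ℝ ι) :
    ⟪Matrix.toEuclideanCLM (𝕜 := ℝ) A y, y⟫ = ∑ i, ∑ j, A i j * y i * y j := by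
  rw [real_inner_comm, Matrix.inner_toEuclideanCLM]
  simp only [dotProduct, Matrix.mulVec, Finset.mul_sum]
  exact Finset.sum_congr rfl fun i _ => Finset.sum_congr rfl fun j _ => by ring

theorem Matrix.trace_toEuclideanCLM (A : Matrix ι ι ℝ) :
    LinearMap.trace ℝ _ (Matrix.toEuclideanCLM (𝕜 := ℝ) A : EuclideanSpace ℝ ι →ₗ[ℝ] _) =
      A.trace := by
  rw [LinearMap.trace_eq_sum_inner _ (EuclideanSpace.basisFun ι ℝ)]
  simp [Matrix.inner_toEuclideanCLM, Matrix.trace]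

variable {n : ℕ} {f g L K : EuclideanSpace ℝ (Fin n) → ℝ} {s : Set (EuclideanSpace ℝ (Fin n))}
  {x : EuclideanSpace ℝ (Fin n)}

theorem laplacianE_congr (hs : IsOpen s) (hfg : Set.EqOn f g s) (hx : x ∈ s) :
    laplacianE f x = laplacianE g x := by
  have h : f =ᶠ[𝓝 x] g := eventuallyEq_of_mem (hs.mem_nhds hx) hfg
  refine Finset.sum_congr rfl fun i _ => ?_
  have hpartial : (fun y => fderiv ℝ f y (EuclideanSpace.single i 1)) =ᶠ[𝓝 x]
      fun y => fderiv ℝ g y (EuclideanSpace.single i 1) :=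
    (h.fderiv (𝕜 := ℝ)).mono fun y hy => by simp only [hy]
  rw [hpartial.fderiv_eq]

theorem HasLaplacianOn.laplacianE_eq (h : HasLaplacianOn f L s) (hs : IsOpen s) (hx : x ∈ s) :
    laplacianE f x = L x := by
  obtain ⟨G, hG⟩ := h
  obtain ⟨G', hG', htrace⟩ := (hG x hx).2
  rw [← htrace, LinearMap.trace_eq_sum_inner _ (EuclideanSpace.basisFun (Fin n) ℝ)]
  refine Finset.sum_congr rfl fun i _ => ?_
  have hpartial : (fun y => fderiv ℝ f y (EuclideanSpace.single i 1)) =ᶠ[𝓝 x]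
      fun y => innerSL ℝ (EuclideanSpace.single i 1) (G y) :=
    eventuallyEq_of_mem (hs.mem_nhds hx) fun y hy => by
      simp [(hG y hy).1.fderiv_apply, real_inner_comm]
  have hG'i : HasFDerivAt (fun y => innerSL ℝ (EuclideanSpace.single i 1) (G y))
      ((innerSL ℝ (EuclideanSpace.single i 1)).comp G') x :=
    (innerSL ℝ _).hasFDerivAt.comp x hG'
  rw [hpartial.fderiv_eq, hG'i.fderiv]
  simp

theorem HasBilaplacianOn.laplacianE_laplacianE_eq (h : HasBilaplacianOn f K s) (hs : IsOpen s)
    (hx : x ∈ s) : laplacianE (laplacianE f) x = K x := by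
  obtain ⟨L, hL, hK⟩ := h
  rw [laplacianE_congr hs (fun y hy => hL.laplacianE_eq hs hy) hx]
  exact hK.laplacianE_eq hs hx

theorem hasBilaplacianOn_log_ansatz (a₀ : ℝ) {A : Matrix (Fin n) (Fin n) ℝ} (hA : A.trace = 0)
    (b : Fin n → ℝ) (c : ℝ) :
    HasBilaplacianOn
      (fun y : EuclideanSpace ℝ (Fin n) => (a₀ * ‖y‖ ^ 2 +
        ((∑ i, ∑ j, A i j * y i * y j) + (∑ i, b i * y i) + c) * Real.log ‖y‖) * ‖y‖ ^ 2)
      (fun y => 8 * n * (n + 2 : ℝ) * a₀ + (2 * (n + 4) * (n + 2) * (∑ i, ∑ j, A i j * y i * y j)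
        + 2 * (n + 2) * n * (∑ i, b i * y i) + 2 * n * (n - 2) * c) / ‖y‖ ^ 2)
      {0}ᶜ := by
  have hT : LinearMap.trace ℝ _
      (Matrix.toEuclideanCLM (𝕜 := ℝ) A : EuclideanSpace ℝ (Fin n) →ₗ[ℝ] _) = 0 := by
    rw [Matrix.trace_toEuclideanCLM, hA]
  have hb (y : EuclideanSpace ℝ (Fin n)) : ⟪WithLp.toLp 2 b, y⟫ = ∑ i, b i * y i := by
    simp [EuclideanSpace.inner_eq_star_dotProduct, dotProduct, mul_comm]
  have h := (((isHarmonicHomogeneous_const a₀).hasBilaplacianOn_mul_norm_pow_four.add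
    (ContinuousLinearMap.isHarmonicHomogeneous_inner_self hT).hasBilaplacianOn_mul_norm_sq_mul_log).add
    (isHarmonicHomogeneous_inner_left (WithLp.toLp 2 b)).hasBilaplacianOn_mul_norm_sq_mul_log).add
    (isHarmonicHomogeneous_const c).hasBilaplacianOn_mul_norm_sq_mul_log
  simp only [Matrix.inner_toEuclideanCLM_self, hb, finrank_euclideanSpace_fin] at h
  convert h using 1 <;> funext y <;> ring

theorem exists_log_ansatz_bilaplacian_eq (hn : n ≠ 2) (a : Fin n → Fin n → ℝ) (b : Fin n → ℝ)
    (c : ℝ) :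
    ∃ (a₀ : ℝ) (a' : Fin n → Fin n → ℝ) (b' : Fin n → ℝ) (c' : ℝ),
      ∀ x : EuclideanSpace ℝ (Fin n), x ≠ 0 →
        laplacianE (laplacianE
            (fun y =>
              (a₀ * ‖y‖ ^ 2 +
                  ((∑ i, ∑ j, a' i j * y i * y j) + (∑ i, b' i * y i) + c') *
                    Real.log ‖y‖) * ‖y‖ ^ 2)) x =
          ((∑ i, ∑ j, a i j * x i * x j) + (∑ i, b i * x i) + c) * ‖x‖ ^ (-2 : ℝ) := by
  set τ := ∑ i, a i i
  -- Each coefficient of the right-hand side is divided by the factor that `Δ²` produces on the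
  -- matching term of `hasBilaplacianOn_log_ansatz`; the trace of `a` is carried by `‖y‖⁴`.
  set A : Matrix (Fin n) (Fin n) ℝ := (2 * (n + 4) * (n + 2) : ℝ)⁻¹ • (Matrix.of a - (τ / n) • 1)
  refine ⟨τ / (8 * n * (n + 2) * n), A, fun i => b i / (2 * (n + 2) * n), c / (2 * n * (n - 2)),
    fun x hx => ?_⟩
  have hn₀ : (n : ℝ) ≠ 0 := by
    rintro h
    obtain rfl : n = 0 := by exact_mod_cast h
    exact hx (Subsingleton.elim _ _)
  have hn₂ : (n : ℝ) - 2 ≠ 0 := sub_ne_zero.2 (by exact_mod_cast hn)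
  have hA : A.trace = 0 := by
    have hτ : (Matrix.of a).trace = τ := rfl
    simp only [A, Matrix.trace_smul, Matrix.trace_sub, Matrix.trace_one, Fintype.card_fin, hτ,
      smul_eq_mul, div_mul_cancel₀ τ hn₀, sub_self, mul_zero]
  have hQ : ∑ i, ∑ j, A i j * x i * x j =
      (2 * (n + 4) * (n + 2) : ℝ)⁻¹ * ((∑ i, ∑ j, a i j * x i * x j) - τ / n * ‖x‖ ^ 2) := by
    rw [← Matrix.inner_toEuclideanCLM_self]
    simp [A, inner_sub_left, real_inner_smul_left, Matrix.inner_toEuclideanCLM_self]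
  have hB : ∑ i, b i / (2 * (n + 2) * n) * x i = (∑ i, b i * x i) / (2 * (n + 2) * n) := by
    simp only [Finset.sum_div, div_mul_eq_mul_div]
  have hx₂ : ‖x‖ ^ 2 ≠ 0 := by positivity
  rw [(hasBilaplacianOn_log_ansatz _ hA _ _).laplacianE_laplacianE_eq isOpen_compl_singleton hx,
    Real.rpow_neg (norm_nonneg x), Real.rpow_two, hQ, hB]
  field_simp
  ring

end EuclideanSpace

/-- The case `β = -1/2`: for every quadratic polynomial
`f(x) = Σ aᵢⱼxᵢxⱼ + Σ bᵢxᵢ + c` on `ℝ⁴` there exist constants `a₀, ãᵢⱼ, b̃ᵢ, c̃` such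
that `q(x) = a₀|x|² + (Σ ãᵢⱼxᵢxⱼ + Σ b̃ᵢxᵢ + c̃)log|x|` satisfies
`Δ²(q(x)|x|²) = f(x)|x|^{-2}` away from the origin. -/
theorem exists_solution_beta_neg_half (a : Fin 4 → Fin 4 → ℝ) (b : Fin 4 → ℝ) (c : ℝ) :
    ∃ (a₀ : ℝ) (a' : Fin 4 → Fin 4 → ℝ) (b' : Fin 4 → ℝ) (c' : ℝ),
      ∀ x : EuclideanSpace ℝ (Fin 4), x ≠ 0 →
        laplacianE (laplacianE
            (fun y =>
              (a₀ * ‖y‖ ^ 2 +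
                  ((∑ i, ∑ j, a' i j * y i * y j) + (∑ i, b' i * y i) + c') *
                    Real.log ‖y‖) * ‖y‖ ^ 2)) x =
          ((∑ i, ∑ j, a i j * x i * x j) + (∑ i, b i * x i) + c) * ‖x‖ ^ (-2 : ℝ) :=
  exists_log_ansatz_bilaplacian_eq (by norm_num) a b c
end
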